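/- arXiv:2301.00136 — 11 statements merged into one kernel-verified Lean document; each statement's English description precedes it below -/
import Mathlib

section
/- For every Boolean function f : {0,1}^n → {0,1} with f(0^n) = 0, there exist k = alt(f) monotone Boolean functions f_1, ..., f_k on {0,1}^n such that f = f_1 ⊕ f_2 ⊕ ... ⊕ f_k. -/
-- chain length bound
lemma my_weight_lt {n : ℕ} {x y : Fin n → Bool} (h : x < y) :
    (∑ j, (x j).toNat) < ∑ j, (y j).toNat := by
  rw [Pi.lt_def] at h
  obtain ⟨hle, i, hi⟩ := h
  apply Finset.sum_lt_sum (fun j _ => by have := hle j; revert this; cases x j <;> cases y j <;> simp)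
  exact ⟨i, Finset.mem_univ i, by revert hi; cases x i <;> cases y i <;> simp⟩

lemma my_chain_bound {n k : ℕ} {c : Fin (k+1) → (Fin n → Bool)} (hc : StrictMono c) :
    k ≤ n := by
  have key : ∀ m (h : m < k + 1), m ≤ ∑ j, (c ⟨m, h⟩ j).toNat := by
    intro m
    induction m with
    | zero => intro h; exact Nat.zero_le _
    | succ m ih =>
      intro h
      have h' : m < k + 1 := by omega
      have := ih h'
      have hlt : c ⟨m, h'⟩ < c ⟨m+1, h⟩ := hc (by simp [Fin.lt_def])
      have := my_weight_lt hlt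
      omega
  have h1 := key k (by omega)
  have h2 : (∑ j, (c ⟨k, by omega⟩ j).toNat) ≤ n := by
    calc (∑ j, (c ⟨k, by omega⟩ j).toNat) ≤ ∑ _j : Fin n, 1 :=
      Finset.sum_le_sum (fun j _ => by cases c ⟨k, by omega⟩ j <;> simp)
    _ = n := by simp
  omega

def altGe {n : ℕ} (f : (Fin n → Bool) → Bool) (k : ℕ) : Prop :=
  ∃ x : Fin (k + 1) → (Fin n → Bool), StrictMono x ∧
    ∀ i : Fin k, f (x i.castSucc) ≠ f (x i.succ)

/-- `alt f` is the maximum number of value changes of `f` along any chain. -/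
noncomputable def alt {n : ℕ} (f : (Fin n → Bool) → Bool) : ℕ :=
  sSup {k | altGe f k}

def xorFold (l : List Bool) : Bool := l.foldr Bool.xor false

def myS {n : ℕ} (f : (Fin n → Bool) → Bool) (x : Fin n → Bool) : Set ℕ :=
  {k | ∃ c : Fin (k+1) → (Fin n → Bool), StrictMono c ∧ f (c 0) = false ∧
    c (Fin.last k) ≤ x ∧ ∀ i : Fin k, f (c i.castSucc) ≠ f (c i.succ)}

noncomputable def myA {n : ℕ} (f : (Fin n → Bool) → Bool) (x : Fin n → Bool) : ℕ :=
  sSup (myS f x)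

lemma strictMono_fin_one {α : Type*} [Preorder α] (c : Fin 1 → α) : StrictMono c := by
  intro a b h
  exact absurd (Subsingleton.elim a b) (ne_of_lt h)

lemma myS_zero_mem {n : ℕ} {f : (Fin n → Bool) → Bool} (h0 : f (fun _ => false) = false)
    (x : Fin n → Bool) : 0 ∈ myS f x := by
  refine ⟨fun _ => (fun _ => false), strictMono_fin_one _, h0, fun j => Bool.false_le _, ?_⟩
  intro i; exact absurd i.2 (by omega)

lemma myS_bdd {n : ℕ} (f : (Fin n → Bool) → Bool) (x : Fin n → Bool) :
    BddAbove (myS f x) := by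
  refine ⟨n, fun k hk => ?_⟩
  obtain ⟨c, hc, -, -, -⟩ := hk
  exact my_chain_bound hc

lemma altGe_bdd {n : ℕ} (f : (Fin n → Bool) → Bool) : BddAbove {k | altGe f k} := by
  refine ⟨n, fun k hk => ?_⟩
  obtain ⟨c, hc, -⟩ := hk
  exact my_chain_bound hc

lemma myA_mem {n : ℕ} {f : (Fin n → Bool) → Bool} (h0 : f (fun _ => false) = false)
    (x : Fin n → Bool) : myA f x ∈ myS f x :=
  Nat.sSup_mem ⟨0, myS_zero_mem h0 x⟩ (myS_bdd f x)

lemma myA_mono {n : ℕ} {f : (Fin n → Bool) → Bool} (h0 : f (fun _ => false) = false)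
    {x y : Fin n → Bool} (hxy : x ≤ y) : myA f x ≤ myA f y := by
  apply le_csSup (myS_bdd f y)
  obtain ⟨c, hc, hc0, hcl, halt⟩ := myA_mem h0 x
  exact ⟨c, hc, hc0, le_trans hcl hxy, halt⟩

lemma myA_le_alt {n : ℕ} {f : (Fin n → Bool) → Bool} (h0 : f (fun _ => false) = false)
    (x : Fin n → Bool) : myA f x ≤ alt f := by
  apply le_csSup (altGe_bdd f)
  obtain ⟨c, hc, -, -, halt⟩ := myA_mem h0 x
  exact ⟨c, hc, halt⟩

lemma chain_parity {n k : ℕ} {f : (Fin n → Bool) → Bool} {c : Fin (k+1) → (Fin n → Bool)}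
    (hc0 : f (c 0) = false) (halt : ∀ i : Fin k, f (c i.castSucc) ≠ f (c i.succ)) :
    f (c (Fin.last k)) = decide (k % 2 = 1) := by
  have key : ∀ m (h : m < k + 1), f (c ⟨m, h⟩) = decide (m % 2 = 1) := by
    intro m
    induction m with
    | zero => intro h; simpa using hc0
    | succ m ih =>
      intro h
      have h' : m < k := by omega
      have step := halt ⟨m, h'⟩
      have hcast : (⟨m, h'⟩ : Fin k).castSucc = ⟨m, by omega⟩ := rfl
      have hsucc : (⟨m, h'⟩ : Fin k).succ = ⟨m+1, h⟩ := rfl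
      rw [hcast, hsucc, ih (by omega)] at step
      rcases Nat.even_or_odd m with he | ho
      · have h1 : m % 2 = 0 := Nat.even_iff.mp he
        have h2 : (m+1) % 2 = 1 := by omega
        simp [h1, h2] at step ⊢
        simpa using step
      · have h1 : m % 2 = 1 := Nat.odd_iff.mp ho
        have h2 : (m+1) % 2 = 0 := by omega
        simp [h1, h2] at step ⊢
        simpa using step
  exact key k (by omega)

lemma f_eq_parity {n : ℕ} {f : (Fin n → Bool) → Bool} (h0 : f (fun _ => false) = false)
    (x : Fin n → Bool) : f x = decide (myA f x % 2 = 1) := by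
  obtain ⟨c, hc, hc0, hcl, halt⟩ := myA_mem h0 x
  have hpar := chain_parity hc0 halt
  by_cases heq : f x = f (c (Fin.last (myA f x)))
  · rw [heq, hpar]
  · -- extend the chain by x, contradicting maximality
    exfalso
    have hne : c (Fin.last (myA f x)) ≠ x := fun h => heq (by rw [h])
    have hlt : c (Fin.last (myA f x)) < x := lt_of_le_of_ne hcl hne
    have hmem : myA f x + 1 ∈ myS f x := by
      refine ⟨Fin.snoc c x, ?_, ?_, ?_, ?_⟩
      · rw [Fin.strictMono_iff_lt_succ]
        intro i
        induction i using Fin.lastCases with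
        | last =>
          rw [Fin.succ_last, Fin.snoc_castSucc, Fin.snoc_last]
          exact hlt
        | cast j =>
          rw [Fin.succ_castSucc, Fin.snoc_castSucc, Fin.snoc_castSucc]
          exact hc Fin.castSucc_lt_succ
      · rw [show (0 : Fin (myA f x + 2)) = Fin.castSucc 0 from rfl, Fin.snoc_castSucc]
        exact hc0
      · rw [Fin.snoc_last]
      · intro i
        induction i using Fin.lastCases with
        | last =>
          rw [Fin.succ_last, Fin.snoc_castSucc, Fin.snoc_last]
          exact fun h => heq h.symm
        | cast j =>
          rw [Fin.succ_castSucc, Fin.snoc_castSucc, Fin.snoc_castSucc]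
          exact halt j
    have := le_csSup (myS_bdd f x) hmem
    have : myA f x + 1 ≤ myA f x := this
    omega

lemma xorFold_cons (a : Bool) (l : List Bool) : xorFold (a :: l) = Bool.xor a (xorFold l) := rfl

lemma xorFold_threshold : ∀ (K m : ℕ), m ≤ K →
    xorFold (List.ofFn (fun i : Fin K => decide ((i : ℕ) < m))) = decide (m % 2 = 1) := by
  intro K
  induction K with
  | zero =>
    intro m hm
    interval_cases m
    simp [xorFold]
  | succ K ih =>
    intro m hm
    rw [List.ofFn_succ, xorFold_cons]
    match m with
    | 0 =>
      have htail : (fun i : Fin K => decide ((i.succ : ℕ) < 0)) =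
          (fun i : Fin K => decide ((i : ℕ) < 0)) := funext fun i => by simp
      rw [htail, ih 0 (Nat.zero_le K)]
      simp
    | m + 1 =>
      simp only [Fin.val_succ, Nat.succ_lt_succ_iff]
      rw [ih m (by omega)]
      have h0 : ((0 : Fin (K+1)) : ℕ) < m + 1 := by simp
      simp only [h0, decide_true]
      rcases Nat.even_or_odd m with he | ho
      · have h1 : m % 2 = 0 := Nat.even_iff.mp he
        have h2 : (m+1) % 2 = 1 := by omega
        simp [h1, h2]
      · have h1 : m % 2 = 1 := Nat.odd_iff.mp ho
        have h2 : (m+1) % 2 = 0 := by omega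
        simp [h1, h2]

/-- Every Boolean function with f(0^n) = 0 is the XOR of alt(f) monotone functions. -/
theorem monotone_decomposition (n : ℕ) (f : (Fin n → Bool) → Bool)
    (h0 : f (fun _ => false) = false) :
    ∃ fs : Fin (alt f) → (Fin n → Bool) → Bool,
      (∀ i, Monotone (fs i)) ∧
      ∀ x, f x = xorFold (List.ofFn fun i => fs i x) := by
  refine ⟨fun i x => decide ((i : ℕ) < myA f x), ?_, ?_⟩
  · intro i x y hxy
    have hA := myA_mono h0 hxy
    by_cases h : (i : ℕ) < myA f x
    · have h' : (i : ℕ) < myA f y := by omega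
      simp [h, h']
    · simp [h]
  · intro x
    rw [xorFold_threshold (alt f) (myA f x) (myA_le_alt h0 x)]
    exact f_eq_parity h0 x
end

section
/- If f : {0,1}^n → {0,1} can be written as f = f_1 ⊕ f_2 ⊕ ... ⊕ f_k where each f_i is monotone, then alt(f) ≤ k + 1; moreover if f(0^n) = 0 then alt(f) ≤ k. -/
/-- If f is an XOR of k monotone functions then alt(f) ≤ k+1, and alt(f) ≤ k if f(0^n)=0. -/
theorem alt_le_of_monotone_decomposition (n k : ℕ) (f : (Fin n → Bool) → Bool)
    (fs : Fin k → (Fin n → Bool) → Bool)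
    (hmono : ∀ i, Monotone (fs i))
    (hdec : ∀ x, f x = xorFold (List.ofFn fun i => fs i x)) :
    alt f ≤ k + 1 ∧ (f (fun _ => false) = false → alt f ≤ k) := by
  have key : ∀ m, altGe f m → m ≤ k := by
    rintro m ⟨x, hx, hne⟩
    have hexists : ∀ j : Fin m, ∃ i : Fin k, fs i (x j.castSucc) ≠ fs i (x j.succ) := by
      intro j
      by_contra h
      push_neg at h
      apply hne j
      rw [hdec, hdec]
      exact congrArg xorFold (congrArg List.ofFn (funext fun i => h i))
    choose g hg using hexists
    have step : ∀ j : Fin m, fs (g j) (x j.castSucc) = false ∧ fs (g j) (x j.succ) = true := by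
      intro j
      have hle : fs (g j) (x j.castSucc) ≤ fs (g j) (x j.succ) :=
        hmono _ (le_of_lt (hx (Fin.castSucc_lt_succ : j.castSucc < j.succ)))
      have hne' := hg j
      revert hle hne'
      cases fs (g j) (x j.castSucc) <;> cases fs (g j) (x j.succ) <;> simp
    have hinj : Function.Injective g := by
      intro j1 j2 heq
      by_contra hne'
      have main : ∀ a b : Fin m, a < b → g a = g b → False := by
        intro a b hab hgab
        have hle1 : a.succ ≤ b.castSucc := by
          rw [Fin.le_def]
          simp only [Fin.val_succ, Fin.coe_castSucc]
          exact Fin.lt_def.mp hab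
        have hmle : fs (g a) (x a.succ) ≤ fs (g a) (x b.castSucc) :=
          hmono _ (hx.monotone hle1)
        rw [(step a).2, hgab, (step b).1] at hmle
        exact absurd hmle (by simp)
      rcases lt_or_gt_of_ne hne' with h | h
      · exact main j1 j2 h heq
      · exact main j2 j1 h heq.symm
    have := Fintype.card_le_of_injective g hinj
    simpa using this
  have hk : alt f ≤ k := csSup_le' (fun m hm => key m hm)
  exact ⟨le_trans hk (Nat.le_succ k), fun _ => hk⟩
end

section
/- Let k be even and let f_1, ..., f_k : {0,1}^n → {0,1} satisfy f_i ⇒ f_{i+1} for all i. Then f_1 ⊕ f_2 ⊕ ... ⊕ f_k equals the function ¬f_1 ∧ (f_2 ∨ ¬f_3) ∧ (f_4 ∨ ¬f_5) ∧ ... ∧ (f_{k-2} ∨ ¬f_{k-1}) ∧ f_k. -/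
theorem Fin.monotone_of_le_of_val_eq_add_one {α : Type*} [Preorder α] {N : ℕ} {f : Fin N → α}
    (h : ∀ i j : Fin N, (j : ℕ) = i + 1 → f i ≤ f j) : Monotone f := by
  cases N with
  | zero => exact fun i => i.elim0
  | succ N => exact Fin.monotone_iff_le_succ.2 fun i => h _ _ (by simp)

theorem Bool.exists_eq_decide_le_of_monotone :
    ∀ {N : ℕ} {f : Fin N → Bool}, Monotone f → ∃ t ≤ N, ∀ i : Fin N, f i = decide (t ≤ i)
  | 0, _, _ => ⟨0, le_rfl, fun i => i.elim0⟩
  | N + 1, f, hf => by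
    cases h0 : f 0 with
    | true =>
      refine ⟨0, by omega, fun i => ?_⟩
      simpa using Bool.le_iff_imp.1 (hf (Fin.zero_le i)) h0
    | false =>
      obtain ⟨t, ht, hsucc⟩ := exists_eq_decide_le_of_monotone (hf.comp Fin.strictMono_succ.monotone)
      refine ⟨t + 1, by omega, Fin.cases (by simp [h0]) fun i => ?_⟩
      simpa using hsucc i

theorem xorFold_ofFn_decide_le (N t : ℕ) :
    xorFold (List.ofFn fun i : Fin N => decide (t ≤ i)) = decide (Odd (N - t)) := by
  induction N generalizing t with
  | zero => simp [xorFold]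
  | succ N ih =>
    rw [List.ofFn_succ]
    show xor _ (xorFold _) = _
    cases t with
    | zero =>
      have h := ih 0
      simp only [Nat.zero_le, decide_true, Nat.sub_zero, List.ofFn_const] at h ⊢
      simp [h, Nat.odd_add_one, ← Nat.not_even_iff_odd]
    | succ t => simpa using ih t

theorem odd_two_mul_sub_iff {m t : ℕ} (ht : t ≤ 2 * m) :
    Odd (2 * m - t) ↔ 0 < t ∧ (∀ j < m - 1, t ≠ 2 * j + 2) ∧ t ≤ 2 * m - 1 := by
  rw [Nat.odd_iff]
  refine ⟨fun h => ⟨by omega, fun j _ => by omega, by omega⟩, fun ⟨h0, heven, hlt⟩ => ?_⟩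
  by_contra h
  exact heven (t / 2 - 1) (by omega) (by omega)

/-- CNF form of an XOR of functions with the implication property (k = 2m even). -/
theorem xor_eq_cnf (n m : ℕ) (hm : 0 < m) (fs : Fin (2 * m) → (Fin n → Bool) → Bool)
    (himp : ∀ i j : Fin (2 * m), (j : ℕ) = (i : ℕ) + 1 →
      ∀ x, fs i x = true → fs j x = true)
    (x : Fin n → Bool) :
    xorFold (List.ofFn fun i => fs i x) = true ↔
      (fs ⟨0, by omega⟩ x = false ∧
       (∀ j : Fin (m - 1), fs ⟨2 * (j : ℕ) + 1, by have := j.isLt; omega⟩ x = true ∨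
          fs ⟨2 * (j : ℕ) + 2, by have := j.isLt; omega⟩ x = false) ∧
       fs ⟨2 * m - 1, by omega⟩ x = true) := by
  have hmono : Monotone fun i => fs i x :=
    Fin.monotone_of_le_of_val_eq_add_one fun i j hij => Bool.le_iff_imp.2 (himp i j hij x)
  obtain ⟨t, ht, hfs⟩ := Bool.exists_eq_decide_le_of_monotone hmono
  rw [funext hfs, xorFold_ofFn_decide_le, decide_eq_true_iff, odd_two_mul_sub_iff ht]
  simp only [hfs, decide_eq_true_eq, decide_eq_false_iff_not]
  refine and_congr (by omega) (and_congr ⟨fun h j => ?_, fun h j hj => ?_⟩ Iff.rfl)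
  · have := h j j.isLt
    omega
  · have : t ≤ 2 * j + 1 ∨ ¬t ≤ 2 * j + 2 := h ⟨j, hj⟩
    omega
end

section
/- For every Boolean function f : {0,1}^n → {0,1}, the minimum height of a monotone decision tree computing f equals ⌈log₂(alt(f) + 1)⌉. -/
inductive MDT (n : ℕ) : Type where
  | leaf : Bool → MDT n
  | node : ((Fin n → Bool) → Bool) → MDT n → MDT n → MDT n

def MDT.eval {n : ℕ} : MDT n → (Fin n → Bool) → Bool
  | .leaf b, _ => b
  | .node q t0 t1, x => if q x then t1.eval x else t0.eval x

def MDT.height {n : ℕ} : MDT n → ℕ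
  | .leaf _ => 0
  | .node _ t0 t1 => max t0.height t1.height + 1

def MDT.size {n : ℕ} : MDT n → ℕ
  | .leaf _ => 1
  | .node _ t0 t1 => t0.size + t1.size

def MDT.MonoQueries {n : ℕ} : MDT n → Prop
  | .leaf _ => True
  | .node q t0 t1 => Monotone q ∧ t0.MonoQueries ∧ t1.MonoQueries

/-- Minimum height of a monotone decision tree computing f. -/
noncomputable def DTm {n : ℕ} (f : (Fin n → Bool) → Bool) : ℕ :=
  sInf {h | ∃ T : MDT n, T.MonoQueries ∧ (∀ x, T.eval x = f x) ∧ T.height = h}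

/-! ### Auxiliary machinery -/

namespace MDTAux

variable {n : ℕ}

/-- `IsChainN f k c` : `c 0 < c 1 < ⋯ < c k` and `f` flips at every step. -/
def IsChainN (f : (Fin n → Bool) → Bool) (k : ℕ) (c : ℕ → (Fin n → Bool)) : Prop :=
  ∀ i < k, c i < c (i + 1) ∧ f (c i) ≠ f (c (i + 1))

/-- `AchainP f x k` : there is a length-`k` flip chain whose top is `≤ x`. -/
def AchainP (f : (Fin n → Bool) → Bool) (x : Fin n → Bool) (k : ℕ) : Prop :=
  ∃ c, IsChainN f k c ∧ c k ≤ x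

/-- Max number of alternations along chains lying below `x`. -/
noncomputable def A (f : (Fin n → Bool) → Bool) (x : Fin n → Bool) : ℕ :=
  sSup {k | AchainP f x k}

def wt (x : Fin n → Bool) : ℕ := (Finset.univ.filter (fun i => x i = true)).card

lemma wt_lt {a b : Fin n → Bool} (h : a < b) : wt a < wt b := by
  obtain ⟨hle, hne⟩ := lt_iff_le_and_ne.mp h
  apply Finset.card_lt_card
  constructor
  · intro i hi
    simp only [Finset.mem_filter, Finset.mem_univ, true_and] at hi ⊢
    exact le_antisymm (Bool.le_true _) (hi ▸ hle i)
  · intro hsub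
    apply hne
    funext i
    have h1 : a i ≤ b i := hle i
    by_cases hb : b i = true
    · have : i ∈ Finset.univ.filter (fun i => b i = true) := by simp [hb]
      have := hsub this
      simp only [Finset.mem_filter, Finset.mem_univ, true_and] at this
      rw [this, hb]
    · have hbf : b i = false := Bool.eq_false_iff.mpr hb
      have haf : a i = false := by
        cases hab : a i
        · rfl
        · rw [hab] at h1
          exact absurd (le_antisymm (Bool.le_true _) h1) hb
      rw [haf, hbf]

lemma chain_mono {f : (Fin n → Bool) → Bool} {k : ℕ} {c : ℕ → (Fin n → Bool)}
    (hc : IsChainN f k c) : ∀ i j, i ≤ j → j ≤ k → c i ≤ c j := by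
  intro i j hij hjk
  obtain ⟨d, rfl⟩ := Nat.exists_eq_add_of_le hij
  clear hij
  induction d with
  | zero => exact le_rfl
  | succ d ih =>
      have h1 : c i ≤ c (i + d) := ih (by omega)
      have h2 : c (i + d) < c (i + d + 1) := (hc (i + d) (by omega)).1
      exact h1.trans (le_of_lt h2)

lemma chain_le_n {f : (Fin n → Bool) → Bool} {k : ℕ} {c : ℕ → (Fin n → Bool)}
    (hc : IsChainN f k c) : k ≤ n := by
  have key : ∀ i ≤ k, i ≤ wt (c i) := by
    intro i
    induction i with
    | zero => omega
    | succ i ih =>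
        intro hik
        have h1 := ih (by omega)
        have h2 := wt_lt (hc i (by omega)).1
        omega
  have h1 := key k le_rfl
  have h2 : wt (c k) ≤ n := by
    have := Finset.card_filter_le (Finset.univ : Finset (Fin n)) (fun i => c k i = true)
    simpa [wt] using this
  omega

lemma altGe_of_chain {f : (Fin n → Bool) → Bool} {k : ℕ} {c : ℕ → (Fin n → Bool)}
    (hc : IsChainN f k c) : altGe f k := by
  refine ⟨fun i => c i.val, ?_, ?_⟩
  · rw [Fin.strictMono_iff_lt_succ]
    intro i
    exact (hc i.val i.isLt).1
  · intro i
    exact (hc i.val i.isLt).2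

lemma chain_of_altGe {f : (Fin n → Bool) → Bool} {k : ℕ} (h : altGe f k) :
    ∃ c : ℕ → (Fin n → Bool), IsChainN f k c := by
  obtain ⟨x, hsm, hflip⟩ := h
  refine ⟨fun i => x ⟨min i k, by omega⟩, ?_⟩
  intro i hik
  have e1 : x ⟨min i k, by omega⟩ = x ((⟨i, hik⟩ : Fin k).castSucc) :=
    congrArg x (Fin.ext (by simp; omega))
  have e2 : x ⟨min (i + 1) k, by omega⟩ = x ((⟨i, hik⟩ : Fin k).succ) :=
    congrArg x (Fin.ext (by simp; omega))
  constructor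
  · show x ⟨min i k, by omega⟩ < x ⟨min (i + 1) k, by omega⟩
    rw [e1, e2]
    exact hsm Fin.castSucc_lt_succ
  · show f (x ⟨min i k, by omega⟩) ≠ f (x ⟨min (i + 1) k, by omega⟩)
    rw [e1, e2]
    exact hflip _

lemma altGe_zero (f : (Fin n → Bool) → Bool) : altGe f 0 :=
  ⟨fun _ => (fun _ => false), fun a b hab => absurd hab (by omega), fun i => i.elim0⟩

lemma bddAbove_altGe (f : (Fin n → Bool) → Bool) : BddAbove {k | altGe f k} := by
  refine ⟨n, fun k hk => ?_⟩
  obtain ⟨c, hc⟩ := chain_of_altGe hk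
  exact chain_le_n hc

lemma achainP_zero (f : (Fin n → Bool) → Bool) (x : Fin n → Bool) : AchainP f x 0 :=
  ⟨fun _ => x, fun i hi => absurd hi (by omega), le_rfl⟩

lemma achainP_nonempty (f : (Fin n → Bool) → Bool) (x : Fin n → Bool) :
    {k | AchainP f x k}.Nonempty :=
  ⟨0, show AchainP f x 0 from achainP_zero f x⟩

lemma bddAbove_achainP (f : (Fin n → Bool) → Bool) (x : Fin n → Bool) :
    BddAbove {k | AchainP f x k} := by
  refine ⟨n, fun k hk => ?_⟩
  obtain ⟨c, hc, _⟩ := hk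
  exact chain_le_n hc

lemma achainP_A (f : (Fin n → Bool) → Bool) (x : Fin n → Bool) : AchainP f x (A f x) :=
  Nat.sSup_mem (achainP_nonempty f x) (bddAbove_achainP f x)

lemma le_A {f : (Fin n → Bool) → Bool} {x : Fin n → Bool} {k : ℕ} (h : AchainP f x k) :
    k ≤ A f x := le_csSup (bddAbove_achainP f x) h

lemma A_le_alt (f : (Fin n → Bool) → Bool) (x : Fin n → Bool) : A f x ≤ alt f := by
  obtain ⟨c, hc, _⟩ := achainP_A f x
  exact le_csSup (bddAbove_altGe f) (show altGe f (A f x) from altGe_of_chain hc)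

lemma A_mono (f : (Fin n → Bool) → Bool) : Monotone (A f) := by
  intro x y hxy
  apply csSup_le_csSup (bddAbove_achainP f y) (achainP_nonempty f x)
  rintro k ⟨c, hc, hcx⟩
  exact ⟨c, hc, hcx.trans hxy⟩

/-- bottom element -/
def botc : Fin n → Bool := fun _ => false

lemma botc_le (x : Fin n → Bool) : botc ≤ x := fun _ => Bool.false_le _

def phi (f : (Fin n → Bool) → Bool) (k : ℕ) : Bool :=
  xor (decide (Odd k)) (f botc)

lemma parity_chain {f : (Fin n → Bool) → Bool} {k : ℕ} {c : ℕ → (Fin n → Bool)}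
    (hc : IsChainN f k c) : ∀ i ≤ k, f (c i) = xor (decide (Odd i)) (f (c 0)) := by
  intro i
  induction i with
  | zero => intro _; simp
  | succ i ih =>
      intro hik
      have h1 := ih (by omega)
      have h2 := (hc i (by omega)).2
      have h3 : f (c (i + 1)) = !(f (c i)) := Bool.eq_not_iff.mpr (Ne.symm h2)
      have h4 : decide (Odd (i + 1)) = !decide (Odd i) := by
        rcases Nat.even_or_odd i with h | h <;>
          simp [Nat.odd_add_one, h, Nat.not_odd_iff_even, Nat.not_even_iff_odd]
      rw [h3, h1, h4, Bool.not_xor]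

/-- The key structural fact: `f x` is determined by the parity of `A f x`. -/
lemma f_eq_phi (f : (Fin n → Bool) → Bool) (x : Fin n → Bool) :
    f x = phi f (A f x) := by
  obtain ⟨c, hc, hcx⟩ := achainP_A f x
  set a := A f x with ha
  have hnot : ¬ AchainP f x (a + 1) := fun h => by have := le_A h; omega
  -- step 1 : f (c a) = f x
  have step1 : f (c a) = f x := by
    rcases eq_or_lt_of_le hcx with h | h
    · rw [h]
    · by_contra hne
      apply hnot
      refine ⟨fun i => if i ≤ a then c i else x, ?_, ?_⟩
      · intro i hi
        dsimp only
        by_cases hia : i < a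
        · rw [if_pos (by omega), if_pos (by omega)]
          exact hc i hia
        · have hieq : i = a := by omega
          rw [hieq, if_pos le_rfl, if_neg (by omega)]
          exact ⟨h, hne⟩
      · dsimp only
        rw [if_neg (by omega)]
  -- step 2 : f (c 0) = f botc
  have step2 : f (c 0) = f botc := by
    by_contra hne
    have hbl : botc < c 0 := by
      rcases eq_or_lt_of_le (botc_le (c 0)) with h | h
      · exact absurd (congrArg f h).symm hne
      · exact h
    apply hnot
    refine ⟨fun i => if i = 0 then botc else c (i - 1), ?_, ?_⟩
    · intro i hi
      dsimp only
      rcases Nat.eq_zero_or_pos i with h0 | h0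
      · rw [h0]
        rw [if_pos rfl, if_neg (by omega)]
        exact ⟨hbl, Ne.symm hne⟩
      · rw [if_neg (by omega), if_neg (by omega)]
        have he : i - 1 + 1 = i := by omega
        have h2 := hc (i - 1) (by omega)
        rw [he] at h2
        rw [show i + 1 - 1 = i from by omega]
        exact h2
    · dsimp only
      rw [if_neg (by omega), show a + 1 - 1 = a from by omega]
      exact hcx
  have step3 := parity_chain hc a le_rfl
  rw [← step1, step3, step2, phi]

/-- binary search tree on the value of `A f`. -/
noncomputable def bsearch (f : (Fin n → Bool) → Bool) : ℕ → ℕ → MDT n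
  | lo, 0 => .leaf (phi f lo)
  | lo, h + 1 =>
      .node (fun x => decide (lo + 2 ^ h ≤ A f x))
        (bsearch f lo h) (bsearch f (lo + 2 ^ h) h)

lemma bsearch_height (f : (Fin n → Bool) → Bool) : ∀ h lo, (bsearch f lo h).height = h := by
  intro h
  induction h with
  | zero => intro lo; rfl
  | succ h ih => intro lo; simp [bsearch, MDT.height, ih]

lemma bsearch_mono (f : (Fin n → Bool) → Bool) : ∀ h lo, (bsearch f lo h).MonoQueries := by
  intro h
  induction h with
  | zero => intro lo; trivial
  | succ h ih =>
      intro lo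
      refine ⟨?_, ih lo, ih (lo + 2 ^ h)⟩
      intro x y hxy
      have hA := A_mono f hxy
      by_cases hd : lo + 2 ^ h ≤ A f x
      · simp [hd, le_trans hd hA]
      · simp only [decide_eq_false hd]
        exact Bool.false_le _

lemma bsearch_eval (f : (Fin n → Bool) → Bool) :
    ∀ h lo x, lo ≤ A f x → A f x < lo + 2 ^ h → (bsearch f lo h).eval x = phi f (A f x) := by
  intro h
  induction h with
  | zero =>
      intro lo x h1 h2
      have : A f x = lo := by simp at h2; omega
      simp [bsearch, MDT.eval, this]
  | succ h ih =>
      intro lo x h1 h2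
      simp only [bsearch, MDT.eval]
      by_cases hd : lo + 2 ^ h ≤ A f x
      · rw [if_pos (by simp [hd])]
        exact ih (lo + 2 ^ h) x hd (by rw [pow_succ] at h2; omega)
      · rw [if_neg (by simp [hd])]
        exact ih lo x h1 (by omega)

/-- Existence of an optimal-height monotone decision tree. -/
lemma exists_tree (f : (Fin n → Bool) → Bool) :
    ∃ T : MDT n, T.MonoQueries ∧ (∀ x, T.eval x = f x) ∧
      T.height = Nat.clog 2 (alt f + 1) := by
  set H := Nat.clog 2 (alt f + 1) with hH
  refine ⟨bsearch f 0 H, bsearch_mono f H 0, ?_, bsearch_height f H 0⟩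
  intro x
  have hb : A f x < 0 + 2 ^ H := by
    have h1 : A f x ≤ alt f := A_le_alt f x
    have h2 : alt f + 1 ≤ 2 ^ H := Nat.le_pow_clog (by norm_num) _
    omega
  rw [bsearch_eval f H 0 x (Nat.zero_le _) hb, ← f_eq_phi]

/-- Lower bound: a flip chain for the evaluated function of a monotone tree is short. -/
lemma lower_bound : ∀ T : MDT n, T.MonoQueries →
    ∀ k (c : ℕ → (Fin n → Bool)), IsChainN T.eval k c → k + 1 ≤ 2 ^ T.height := by
  intro T
  induction T with
  | leaf b =>
      intro _ k c hc
      rcases Nat.eq_zero_or_pos k with h0 | h0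
      · rw [h0]; simp [MDT.height]
      · exact absurd rfl (hc 0 (by omega)).2
  | node q t0 t1 ih0 ih1 =>
      intro hT k c hc
      obtain ⟨hq, h0, h1⟩ := hT
      have hmono := chain_mono hc
      simp only [MDT.height]
      have hpow0 : (2:ℕ) ^ t0.height ≤ 2 ^ max t0.height t1.height :=
        Nat.pow_le_pow_right (by norm_num) (le_max_left _ _)
      have hpow1 : (2:ℕ) ^ t1.height ≤ 2 ^ max t0.height t1.height :=
        Nat.pow_le_pow_right (by norm_num) (le_max_right _ _)
      rw [pow_succ]
      by_cases hex : ∃ i, i ≤ k ∧ q (c i) = true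
      · classical
        set m := Nat.find hex with hm
        obtain ⟨hmk, hqm⟩ := Nat.find_spec hex
        have hmin : ∀ i < m, q (c i) = false := by
          intro i hi
          have h2 := Nat.find_min hex hi
          push_neg at h2
          exact Bool.eq_false_iff.mpr (h2 (by omega))
        have hup : ∀ i, m ≤ i → i ≤ k → q (c i) = true := by
          intro i hmi hik
          have hle : c m ≤ c i := hmono m i hmi hik
          exact le_antisymm (Bool.le_true _) (hqm ▸ hq hle)
        have hb0 : m ≤ 2 ^ t0.height := by
          rcases Nat.eq_zero_or_pos m with hz | hz
          · rw [hz]; exact Nat.zero_le _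
          · have hchain : IsChainN t0.eval (m - 1) c := by
              intro i hi
              have hik : i < k := by omega
              have q1 : q (c i) = false := hmin i (by omega)
              have q2 : q (c (i + 1)) = false := hmin (i + 1) (by omega)
              have hstep := hc i hik
              refine ⟨hstep.1, ?_⟩
              have e1 : (MDT.node q t0 t1).eval (c i) = t0.eval (c i) := by
                simp [MDT.eval, q1]
              have e2 : (MDT.node q t0 t1).eval (c (i + 1)) = t0.eval (c (i + 1)) := by
                simp [MDT.eval, q2]
              rw [← e1, ← e2]
              exact hstep.2
            have := ih0 h0 (m - 1) c hchain
            omega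
        have hb1 : k - m + 1 ≤ 2 ^ t1.height := by
          apply ih1 h1 (k - m) (fun i => c (m + i))
          intro i hi
          have hik : m + i < k := by omega
          have q1 : q (c (m + i)) = true := hup (m + i) (by omega) (by omega)
          have q2 : q (c (m + i + 1)) = true := hup (m + i + 1) (by omega) (by omega)
          have hstep := hc (m + i) hik
          have hidx : m + (i + 1) = m + i + 1 := by omega
          constructor
          · show c (m + i) < c (m + (i + 1))
            rw [hidx]
            exact hstep.1
          · show t1.eval (c (m + i)) ≠ t1.eval (c (m + (i + 1)))
            rw [hidx]
            have e1 : (MDT.node q t0 t1).eval (c (m + i)) = t1.eval (c (m + i)) := by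
              simp [MDT.eval, q1]
            have e2 : (MDT.node q t0 t1).eval (c (m + i + 1)) = t1.eval (c (m + i + 1)) := by
              simp [MDT.eval, q2]
            rw [← e1, ← e2]
            exact hstep.2
        omega
      · push_neg at hex
        have hall : ∀ i ≤ k, q (c i) = false := fun i hik =>
          Bool.eq_false_iff.mpr (hex i hik)
        have hchain : IsChainN t0.eval k c := by
          intro i hik
          have q1 : q (c i) = false := hall i (by omega)
          have q2 : q (c (i + 1)) = false := hall (i + 1) (by omega)
          have hstep := hc i hik
          refine ⟨hstep.1, ?_⟩
          have e1 : (MDT.node q t0 t1).eval (c i) = t0.eval (c i) := by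
            simp [MDT.eval, q1]
          have e2 : (MDT.node q t0 t1).eval (c (i + 1)) = t0.eval (c (i + 1)) := by
            simp [MDT.eval, q2]
          rw [← e1, ← e2]
          exact hstep.2
        have := ih0 h0 k c hchain
        omega

end MDTAux

/-- The minimum monotone decision tree height of f equals ⌈log₂(alt(f)+1)⌉. -/
theorem dtm_eq_clog_alt (n : ℕ) (f : (Fin n → Bool) → Bool) :
    DTm f = Nat.clog 2 (alt f + 1) := by
  classical
  obtain ⟨T, hTm, hTe, hTh⟩ := MDTAux.exists_tree f
  have hmem : Nat.clog 2 (alt f + 1) ∈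
      {h | ∃ T : MDT n, T.MonoQueries ∧ (∀ x, T.eval x = f x) ∧ T.height = h} :=
    ⟨T, hTm, hTe, hTh⟩
  have hDTm : DTm f =
      sInf {h | ∃ T : MDT n, T.MonoQueries ∧ (∀ x, T.eval x = f x) ∧ T.height = h} := rfl
  apply le_antisymm
  · rw [hDTm]
    exact Nat.sInf_le hmem
  · obtain ⟨S, hSm, hSe, hSh⟩ := Nat.sInf_mem (⟨_, hmem⟩ : Set.Nonempty
      {h | ∃ T : MDT n, T.MonoQueries ∧ (∀ x, T.eval x = f x) ∧ T.height = h})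
    rw [← hDTm] at hSh
    have h1 : (1:ℕ) ≤ 2 ^ DTm f := Nat.one_le_two_pow
    have hb : ∀ k ∈ {k | altGe f k}, k ≤ 2 ^ DTm f - 1 := by
      intro k hk
      obtain ⟨c, hc⟩ := MDTAux.chain_of_altGe hk
      have hc' : MDTAux.IsChainN S.eval k c := by
        intro i hi
        have := hc i hi
        rw [hSe, hSe]
        exact this
      have := MDTAux.lower_bound S hSm k c hc'
      rw [hSh] at this
      omega
    have hsup : sSup {k | altGe f k} ≤ 2 ^ DTm f - 1 :=
      csSup_le ⟨0, show altGe f 0 from MDTAux.altGe_zero f⟩ hb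
    have halt : alt f ≤ 2 ^ DTm f - 1 := hsup
    have halt1 : alt f + 1 ≤ 2 ^ DTm f := by omega
    exact (Nat.clog_le_iff_le_pow (by norm_num)).mpr halt1
end

section
/- For every Boolean function f : {0,1}^n → {0,1}, the minimum length of a monotone decision list computing f equals alt(f) + 1. -/
/-- Evaluate a decision list given by explicit nodes `qs` and a final default node
(the implicit last node with constant-1 query and value `d`). -/
def DLeval {n : ℕ} : List (((Fin n → Bool) → Bool) × Bool) → Bool → (Fin n → Bool) → Bool
  | [], d, _ => d
  | (q, c) :: rest, d, x => if q x then c else DLeval rest d x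

/-- Minimum length of a monotone decision list computing f (the final constant-1
node with value d is counted, hence the +1). -/
noncomputable def DLm {n : ℕ} (f : (Fin n → Bool) → Bool) : ℕ :=
  sInf {ℓ | ∃ (qs : List (((Fin n → Bool) → Bool) × Bool)) (d : Bool),
    (∀ p ∈ qs, Monotone p.1) ∧ (∀ x, DLeval qs d x = f x) ∧ ℓ = qs.length + 1}

namespace MDLaux

variable {n : ℕ}

/-- weight of a boolean vector -/
def wt (v : Fin n → Bool) : ℕ := (Finset.univ.filter fun j => v j = true).card

lemma wt_le (v : Fin n → Bool) : wt v ≤ n := by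
  classical
  calc wt v ≤ (Finset.univ : Finset (Fin n)).card := Finset.card_filter_le _ _
    _ = n := by simp

lemma wt_lt {x y : Fin n → Bool} (h : x < y) : wt x < wt y := by
  classical
  obtain ⟨hle, hne⟩ := lt_iff_le_and_ne.mp h
  apply Finset.card_lt_card
  rw [Finset.ssubset_def]
  constructor
  · intro i hi
    simp only [Finset.mem_filter, Finset.mem_univ, true_and] at hi ⊢
    have h2 := hle i
    rw [hi] at h2
    exact le_antisymm (Bool.le_true _) h2
  · intro hsub
    obtain ⟨i, hi⟩ := Function.ne_iff.mp hne
    have h2 := hle i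
    have hx : x i = false := by
      cases hx : x i
      · rfl
      · cases hy : y i
        · rw [hx, hy] at h2; exact absurd h2 (by simp)
        · exact absurd (hx.trans hy.symm) hi
    have hy : y i = true := by
      cases hy : y i
      · rw [hx, hy] at hi; exact absurd rfl hi
      · rfl
    have := hsub (Finset.mem_filter.mpr ⟨Finset.mem_univ i, hy⟩)
    rw [Finset.mem_filter] at this
    exact absurd this.2 (by simp [hx])

lemma strictMono_chain_le {k : ℕ} {c : Fin (k + 1) → (Fin n → Bool)}
    (hc : StrictMono c) : k ≤ n := by
  have hinj : Function.Injective
      (fun i : Fin (k + 1) => (⟨wt (c i), Nat.lt_succ_of_le (wt_le _)⟩ : Fin (n + 1))) := by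
    intro a b hab
    by_contra hne
    rcases lt_or_gt_of_ne hne with h | h
    · exact absurd (Fin.mk.injEq .. ▸ hab) (Nat.ne_of_lt (wt_lt (hc h)))
    · exact absurd (Fin.mk.injEq .. ▸ hab) (Nat.ne_of_gt (wt_lt (hc h)))
  have := Fintype.card_le_of_injective _ hinj
  simpa using this

/-- `altEnd f k x`: there is an alternating chain of `k+1` points ending at `x`. -/
def altEnd (f : (Fin n → Bool) → Bool) (k : ℕ) (x : Fin n → Bool) : Prop :=
  ∃ c : Fin (k + 1) → (Fin n → Bool), StrictMono c ∧ c (Fin.last k) = x ∧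
    ∀ i : Fin k, f (c i.castSucc) ≠ f (c i.succ)

lemma strictMono_snoc {m : ℕ} {α : Type*} [Preorder α] {d : Fin m → α} {y : α}
    (hd : StrictMono d) (hy : ∀ i, d i < y) : StrictMono (Fin.snoc d y) := by
  intro a b hab
  obtain ⟨a', rfl⟩ := Fin.exists_castSucc_eq.mpr (Fin.ne_last_of_lt hab)
  rcases eq_or_ne b (Fin.last m) with rfl | hb
  · rw [Fin.snoc_castSucc, Fin.snoc_last]
    exact hy a'
  · obtain ⟨b', rfl⟩ := Fin.exists_castSucc_eq.mpr hb
    rw [Fin.snoc_castSucc, Fin.snoc_castSucc]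
    exact hd (Fin.castSucc_lt_castSucc_iff.mp hab)

variable {f : (Fin n → Bool) → Bool}

lemma altEnd_zero (f : (Fin n → Bool) → Bool) (x : Fin n → Bool) : altEnd f 0 x := by
  refine ⟨fun _ => x, ?_, rfl, fun i => i.elim0⟩
  intro a b hab
  simp only [Fin.lt_def] at hab
  omega

lemma altEnd_bdd {x : Fin n → Bool} : BddAbove {k | altEnd f k x} :=
  ⟨n, fun k hk => by obtain ⟨c, hc, -, -⟩ := hk; exact strictMono_chain_le hc⟩

lemma altEnd_snoc {k : ℕ} {x y : Fin n → Bool} (h : altEnd f k x) (hxy : x < y)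
    (hf : f x ≠ f y) : altEnd f (k + 1) y := by
  obtain ⟨c, hc, hcl, halt⟩ := h
  refine ⟨Fin.snoc c y, strictMono_snoc hc ?_, Fin.snoc_last .., ?_⟩
  · intro i
    exact lt_of_le_of_lt (hcl ▸ hc.monotone (Fin.le_last i)) hxy
  · intro i
    rcases eq_or_ne i (Fin.last k) with rfl | hi
    · rw [Fin.succ_last, Fin.snoc_castSucc, Fin.snoc_last, hcl]
      exact hf
    · obtain ⟨j, rfl⟩ := Fin.exists_castSucc_eq.mpr hi
      rw [Fin.succ_castSucc, Fin.snoc_castSucc, Fin.snoc_castSucc]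
      exact halt j

lemma altEnd_extend {k : ℕ} {x y : Fin n → Bool} (h : altEnd f k x) (hxy : x ≤ y)
    (hf : f x = f y) : altEnd f k y := by
  obtain ⟨c, hc, hcl, halt⟩ := h
  refine ⟨Fin.snoc (c ∘ Fin.castSucc) y, strictMono_snoc (hc.comp Fin.strictMono_castSucc) ?_,
    Fin.snoc_last .., ?_⟩
  · intro i
    exact lt_of_lt_of_le (hcl ▸ hc (Fin.castSucc_lt_last i)) hxy
  · intro i
    by_cases hi : i.succ = Fin.last k
    · rw [hi, Fin.snoc_last, Fin.snoc_castSucc]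
      have : f (c i.castSucc) ≠ f (c i.succ) := halt i
      rw [hi, hcl, hf] at this
      exact this
    · obtain ⟨j, hj⟩ := Fin.exists_castSucc_eq.mpr hi
      rw [← hj, Fin.snoc_castSucc, Fin.snoc_castSucc]
      have := halt i
      rw [← hj] at this
      exact this

/-- extract the previous element of an alternating chain -/
lemma altEnd_pred {k : ℕ} {x : Fin n → Bool} (h : altEnd f (k + 1) x) :
    ∃ x', x' < x ∧ f x' ≠ f x ∧ altEnd f k x' := by
  obtain ⟨c, hc, hcl, halt⟩ := h
  refine ⟨c (Fin.last k).castSucc, hcl ▸ hc (Fin.castSucc_lt_last _), ?_, ?_⟩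
  · have := halt (Fin.last k)
    rwa [Fin.succ_last, hcl] at this
  · refine ⟨c ∘ Fin.castSucc, hc.comp Fin.strictMono_castSucc, rfl, ?_⟩
    intro i
    have := halt i.castSucc
    rw [Fin.succ_castSucc] at this
    exact this

/-- max alternations of a chain ending at x -/
noncomputable def talt (f : (Fin n → Bool) → Bool) (x : Fin n → Bool) : ℕ :=
  sSup {k | altEnd f k x}

lemma altEnd_talt (f : (Fin n → Bool) → Bool) (x : Fin n → Bool) : altEnd f (talt f x) x :=
  Nat.sSup_mem ⟨0, altEnd_zero f x⟩ altEnd_bdd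

lemma le_talt {k : ℕ} {x : Fin n → Bool} (h : altEnd f k x) : k ≤ talt f x :=
  le_csSup altEnd_bdd h

lemma altGe_bdd : BddAbove {k | altGe f k} :=
  ⟨n, fun k hk => by obtain ⟨c, hc, -⟩ := hk; exact strictMono_chain_le hc⟩

lemma altGe_alt (f : (Fin n → Bool) → Bool) : altGe f (alt f) := by
  have h0 : altGe f 0 := by
    obtain ⟨c, hc, -, hl⟩ := altEnd_zero f (fun _ => false)
    exact ⟨c, hc, hl⟩
  exact Nat.sSup_mem ⟨0, show (0:ℕ) ∈ {k | altGe f k} from h0⟩ altGe_bdd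

lemma le_alt {k : ℕ} (h : altGe f k) : k ≤ alt f := le_csSup altGe_bdd h

lemma talt_le_alt (f : (Fin n → Bool) → Bool) (x : Fin n → Bool) : talt f x ≤ alt f := by
  obtain ⟨c, hc, -, halt⟩ := altEnd_talt f x
  exact le_alt ⟨c, hc, halt⟩

lemma talt_mono (f : (Fin n → Bool) → Bool) : Monotone (talt f) := by
  intro x y hxy
  refine csSup_le ⟨0, altEnd_zero f x⟩ ?_
  intro k hk
  by_cases hf : f x = f y
  · exact le_talt (altEnd_extend hk hxy hf)
  · rcases eq_or_ne x y with rfl | hne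
    · exact le_talt hk
    · exact le_trans (Nat.le_succ k) (le_talt (altEnd_snoc hk (lt_of_le_of_ne hxy hne) hf))

/-- alternating value sequence -/
def bB (f : (Fin n → Bool) → Bool) (k : ℕ) : Bool :=
  if k % 2 = 0 then f (fun _ => false) else !(f (fun _ => false))

lemma bB_succ (f : (Fin n → Bool) → Bool) (k : ℕ) : bB f (k + 1) = !(bB f k) := by
  rcases Nat.mod_two_eq_zero_or_one k with h | h <;>
    simp [bB, h, Nat.add_mod, Nat.mod_two_eq_zero_or_one]

lemma f_eq_bB (f : (Fin n → Bool) → Bool) :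
    ∀ (k : ℕ) (x : Fin n → Bool), talt f x = k → f x = bB f k := by
  intro k
  induction k with
  | zero =>
    intro x hx
    rw [bB]
    simp only [Nat.zero_mod, if_pos rfl]
    by_contra hne
    have hbot : (fun _ => false : Fin n → Bool) ≤ x := fun i => Bool.false_le _
    have hnex : (fun _ => false : Fin n → Bool) ≠ x := by
      intro h; rw [← h] at hne; exact hne rfl
    have h1 : altEnd f 1 x :=
      altEnd_snoc (altEnd_zero f _) (lt_of_le_of_ne hbot hnex) (fun h => hne h.symm)
    have := le_talt h1
    omega
  | succ m ih =>
    intro x hx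
    have h1 : altEnd f (m + 1) x := hx ▸ altEnd_talt f x
    obtain ⟨x', hlt, hne, hm⟩ := altEnd_pred h1
    have hub : talt f x' ≤ m := by
      have := le_talt (altEnd_snoc (altEnd_talt f x') hlt hne)
      omega
    have heq : talt f x' = m := le_antisymm hub (le_talt hm)
    have := ih x' heq
    rw [bB_succ]
    cases hfx : f x' <;> cases hfy : f x <;>
      simp_all

/-- the constructed decision list -/
noncomputable def DLlist (f : (Fin n → Bool) → Bool) : ℕ → List (((Fin n → Bool) → Bool) × Bool)
  | 0 => []
  | m + 1 => (fun x => decide (m + 1 ≤ talt f x), bB f (m + 1)) :: DLlist f m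

lemma DLlist_length (f : (Fin n → Bool) → Bool) (m : ℕ) : (DLlist f m).length = m := by
  induction m with
  | zero => rfl
  | succ m ih => simp [DLlist, ih]

lemma DLlist_mono (f : (Fin n → Bool) → Bool) (m : ℕ) :
    ∀ p ∈ DLlist f m, Monotone p.1 := by
  induction m with
  | zero => intro p hp; simp [DLlist] at hp
  | succ m ih =>
    intro p hp
    rcases List.mem_cons.mp hp with rfl | hp
    · intro x y hxy
      have ht := talt_mono f hxy
      by_cases h : m + 1 ≤ talt f x
      · simp only [decide_eq_true h, decide_eq_true (le_trans h ht), le_refl]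
      · simp only [decide_eq_false h, Bool.false_le]
    · exact ih p hp

lemma DLlist_eval (f : (Fin n → Bool) → Bool) (m : ℕ) (x : Fin n → Bool) :
    DLeval (DLlist f m) (bB f 0) x = bB f (min (talt f x) m) := by
  induction m with
  | zero => simp [DLlist, DLeval]
  | succ m ih =>
    rw [DLlist]
    show (if decide (m + 1 ≤ talt f x) then bB f (m + 1) else DLeval (DLlist f m) (bB f 0) x)
      = bB f (min (talt f x) (m + 1))
    by_cases h : m + 1 ≤ talt f x
    · rw [if_pos (by simpa using h)]
      congr 1
      omega
    · rw [if_neg (by simpa using h), ih]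
      congr 1
      omega

lemma DLm_mem (f : (Fin n → Bool) → Bool) :
    alt f + 1 ∈ {ℓ | ∃ (qs : List (((Fin n → Bool) → Bool) × Bool)) (d : Bool),
      (∀ p ∈ qs, Monotone p.1) ∧ (∀ x, DLeval qs d x = f x) ∧ ℓ = qs.length + 1} := by
  refine ⟨DLlist f (alt f), bB f 0, DLlist_mono f _, ?_, by rw [DLlist_length]⟩
  intro x
  rw [DLlist_eval, min_eq_left (talt_le_alt f x)]
  exact (f_eq_bB f (talt f x) x rfl).symm

lemma lower_bound (qs : List (((Fin n → Bool) → Bool) × Bool)) :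
    ∀ (d : Bool), (∀ p ∈ qs, Monotone p.1) →
    ∀ (k : ℕ) (x : Fin (k + 1) → (Fin n → Bool)), StrictMono x →
    (∀ i : Fin k, DLeval qs d (x i.castSucc) ≠ DLeval qs d (x i.succ)) →
    k ≤ qs.length := by
  induction qs with
  | nil =>
    intro d _ k x _ halt
    cases k with
    | zero => exact le_refl 0
    | succ m => exact absurd rfl (halt ⟨0, by omega⟩)
  | cons hd tl ih =>
    intro d hmono k x hx halt
    obtain ⟨q, c⟩ := hd
    have hq : Monotone q := hmono (q, c) List.mem_cons_self
    have htl : ∀ p ∈ tl, Monotone p.1 := fun p hp => hmono p (List.mem_cons_of_mem _ hp)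
    cases k with
    | zero => exact Nat.zero_le _
    | succ m =>
      by_cases hlast : q (x (Fin.last (m + 1))) = true
      · have h2 : q (x (Fin.last m).castSucc) = false := by
          by_contra hc2
          rw [Bool.not_eq_false] at hc2
          have := halt (Fin.last m)
          rw [Fin.succ_last] at this
          apply this
          show (if q (x (Fin.last m).castSucc) then c else _)
            = (if q (x (Fin.last (m + 1))) then c else _)
          rw [if_pos hc2, if_pos hlast]
        have hall : ∀ i : Fin (m + 1), q (x i.castSucc) = false := by
          intro i
          have hle : x i.castSucc ≤ x (Fin.last m).castSucc :=
            hx.monotone (Fin.castSucc_le_castSucc_iff.mpr (Fin.le_last i))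
          have := hq hle
          rw [h2] at this
          exact le_antisymm this (Bool.false_le _)
        have hm : m ≤ tl.length := by
          refine ih d htl m (x ∘ Fin.castSucc) (hx.comp Fin.strictMono_castSucc) ?_
          intro i
          have := halt i.castSucc
          rw [Fin.succ_castSucc] at this
          show DLeval tl d (x i.castSucc.castSucc) ≠ DLeval tl d (x i.succ.castSucc)
          have e1 : DLeval ((q, c) :: tl) d (x i.castSucc.castSucc)
              = DLeval tl d (x i.castSucc.castSucc) := by
            show (if q (x i.castSucc.castSucc) then c else _) = _
            rw [if_neg (by simp [hall i.castSucc])]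
          have e2 : DLeval ((q, c) :: tl) d (x i.succ.castSucc)
              = DLeval tl d (x i.succ.castSucc) := by
            show (if q (x i.succ.castSucc) then c else _) = _
            rw [if_neg (by rw [hall i.succ]; simp)]
          rw [← e1, ← e2]
          exact this
        simpa using Nat.succ_le_succ hm
      · have hall : ∀ i : Fin (m + 2), q (x i) = false := by
          intro i
          have hle : x i ≤ x (Fin.last (m + 1)) := hx.monotone (Fin.le_last i)
          have := hq hle
          rw [Bool.not_eq_true] at hlast
          rw [hlast] at this
          exact le_antisymm this (Bool.false_le _)
        have hm : m + 1 ≤ tl.length := by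
          refine ih d htl (m + 1) x hx ?_
          intro i
          have := halt i
          have e1 : DLeval ((q, c) :: tl) d (x i.castSucc) = DLeval tl d (x i.castSucc) := by
            show (if q (x i.castSucc) then c else _) = _
            rw [if_neg (by simp [hall i.castSucc])]
          have e2 : DLeval ((q, c) :: tl) d (x i.succ) = DLeval tl d (x i.succ) := by
            show (if q (x i.succ) then c else _) = _
            rw [if_neg (by simp [hall i.succ])]
          rw [← e1, ← e2]
          exact this
        exact le_trans hm (Nat.le_succ _)

end MDLaux

/-- The minimum monotone decision list length of f equals alt(f)+1. -/
theorem dlm_eq_alt_succ (n : ℕ) (f : (Fin n → Bool) → Bool) :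
    DLm f = alt f + 1 := by
  apply le_antisymm
  · exact Nat.sInf_le (MDLaux.DLm_mem f)
  · refine le_csInf ⟨_, MDLaux.DLm_mem f⟩ ?_
    rintro ℓ ⟨qs, d, hmono, hcorrect, rfl⟩
    obtain ⟨x, hx, halt⟩ := MDLaux.altGe_alt f
    have := MDLaux.lower_bound qs d hmono (alt f) x hx (by
      intro i
      rw [hcorrect, hcorrect]
      exact halt i)
    omega
end

section
/- If f : {0,1}^n → {0,1} is computed by a monotone decision list of length ℓ, then alt(f) ≤ ℓ − 1. -/
/-- Index of the first node that fires (length of list if none). -/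
def DLidx {n : ℕ} : List (((Fin n → Bool) → Bool) × Bool) → (Fin n → Bool) → ℕ
  | [], _ => 0
  | (q, _) :: rest, x => if q x then 0 else DLidx rest x + 1

lemma DLidx_le_length {n : ℕ} (qs : List (((Fin n → Bool) → Bool) × Bool))
    (x : Fin n → Bool) : DLidx qs x ≤ qs.length := by
  induction qs with
  | nil => simp [DLidx]
  | cons p rest ih =>
    obtain ⟨q, c⟩ := p
    simp only [DLidx, List.length_cons]
    split
    · omega
    · omega

lemma DLidx_antitone {n : ℕ} (qs : List (((Fin n → Bool) → Bool) × Bool))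
    (hmono : ∀ p ∈ qs, Monotone p.1) {x y : Fin n → Bool} (hxy : x ≤ y) :
    DLidx qs y ≤ DLidx qs x := by
  induction qs with
  | nil => simp [DLidx]
  | cons p rest ih =>
    obtain ⟨q, c⟩ := p
    have hq : Monotone q := hmono (q, c) List.mem_cons_self
    simp only [DLidx]
    by_cases hx : q x
    · have : q y = true := by
        have := hq hxy
        rw [hx] at this
        exact le_antisymm (Bool.le_true _) this
      simp [hx, this]
    · by_cases hy : q y
      · simp [hx, hy]
      · simp only [hx, hy, if_neg, Bool.false_eq_true, ite_false]
        have := ih (fun p hp => hmono p (List.mem_cons_of_mem _ hp))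
        omega

lemma DLeval_eq_of_idx_eq {n : ℕ} (qs : List (((Fin n → Bool) → Bool) × Bool))
    (d : Bool) {x y : Fin n → Bool} (h : DLidx qs x = DLidx qs y) :
    DLeval qs d x = DLeval qs d y := by
  induction qs with
  | nil => rfl
  | cons p rest ih =>
    obtain ⟨q, c⟩ := p
    simp only [DLidx, DLeval] at *
    by_cases hx : q x <;> by_cases hy : q y <;> simp [hx, hy] at h ⊢
    exact ih h

/-- If f is computed by a monotone decision list of length ℓ then alt(f) ≤ ℓ - 1. -/
theorem alt_le_mdl_length (n : ℕ) (f : (Fin n → Bool) → Bool)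
    (qs : List (((Fin n → Bool) → Bool) × Bool)) (d : Bool) (ℓ : ℕ)
    (hmono : ∀ p ∈ qs, Monotone p.1)
    (hcomp : ∀ x, DLeval qs d x = f x)
    (hlen : ℓ = qs.length + 1) :
    alt f ≤ ℓ - 1 := by
  subst hlen
  simp only [Nat.add_sub_cancel]
  apply csSup_le'
  rintro k ⟨x, hsm, halt⟩
  -- the index function along the chain
  set g : Fin (k + 1) → ℕ := fun i => DLidx qs (x i) with hg
  have hstep : ∀ i : Fin k, g i.succ < g i.castSucc := by
    intro i
    have hle : x i.castSucc ≤ x i.succ := le_of_lt (hsm Fin.castSucc_lt_succ)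
    have h1 : g i.succ ≤ g i.castSucc := DLidx_antitone qs hmono hle
    rcases lt_or_eq_of_le h1 with h | h
    · exact h
    · exfalso
      apply halt i
      rw [← hcomp, ← hcomp]
      exact DLeval_eq_of_idx_eq qs d (h.symm)
  have key : ∀ j : ℕ, (hj : j < k + 1) → g ⟨j, hj⟩ + j ≤ g 0 := by
    intro j
    induction j with
    | zero => intro hj; simp
    | succ m ih =>
      intro hj
      have hm : m < k := by omega
      have h1 := hstep ⟨m, hm⟩
      have h2 := ih (by omega)
      have hcs : (⟨m, hm⟩ : Fin k).castSucc = ⟨m, by omega⟩ := rfl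
      have hsc : (⟨m, hm⟩ : Fin k).succ = ⟨m + 1, hj⟩ := rfl
      rw [hcs, hsc] at h1
      omega
  have h0 : g 0 ≤ qs.length := DLidx_le_length qs (x 0)
  have := key k (by omega)
  omega
end

section
/- For every Boolean function f : {0,1}^n → {0,1}, the minimum height of a non-adaptive monotone decision tree computing f equals alt(f). -/
/-- Minimum height of a non-adaptive monotone decision tree computing f:
the least k such that f(x) = g(f₁(x),...,f_k(x)) for monotone f_i. -/
noncomputable def DTmna {n : ℕ} (f : (Fin n → Bool) → Bool) : ℕ :=
  sInf {k | ∃ (fs : Fin k → (Fin n → Bool) → Bool) (g : (Fin k → Bool) → Bool),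
    (∀ i, Monotone (fs i)) ∧ ∀ x, f x = g (fun i => fs i x)}

namespace DTAlt

variable {n : ℕ}

def weight (x : Fin n → Bool) : ℕ := (Finset.univ.filter fun i => x i = true).card

lemma weight_mono {x y : Fin n → Bool} (h : x < y) : weight x < weight y := by
  obtain ⟨hle, i, hi⟩ := Pi.lt_def.mp h
  rw [Bool.lt_iff] at hi
  apply Finset.card_lt_card
  constructor
  · intro j hj
    simp only [Finset.mem_filter, Finset.mem_univ, true_and] at hj ⊢
    have := hle j
    rw [hj] at this
    exact Bool.eq_true_of_true_le this
  · intro hsub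
    have := hsub (Finset.mem_filter.mpr ⟨Finset.mem_univ i, hi.2⟩)
    simp only [Finset.mem_filter] at this
    rw [hi.1] at this
    simp at this

lemma weight_le (x : Fin n → Bool) : weight x ≤ n := by
  calc weight x ≤ (Finset.univ : Finset (Fin n)).card := Finset.card_filter_le _ _
  _ = n := by simp

lemma chain_le {k : ℕ} (c : Fin (k + 1) → (Fin n → Bool)) (hc : StrictMono c) : k ≤ n := by
  have hinj : Function.Injective (fun i : Fin (k+1) => (⟨weight (c i), Nat.lt_succ_of_le (weight_le _)⟩ : Fin (n+1))) := by
    intro a b hab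
    simp only [Fin.mk.injEq] at hab
    by_contra hne
    rcases lt_or_gt_of_ne hne with h | h
    · exact absurd hab (Nat.ne_of_lt (weight_mono (hc h)))
    · exact absurd hab.symm (Nat.ne_of_lt (weight_mono (hc h)))
  have := Fintype.card_le_of_injective _ hinj
  simpa using this

def SB (f : (Fin n → Bool) → Bool) (x : Fin n → Bool) : Set ℕ :=
  {k | ∃ c : Fin (k + 1) → (Fin n → Bool), StrictMono c ∧ (∀ i, c i ≤ x) ∧
    ∀ i : Fin k, f (c i.castSucc) ≠ f (c i.succ)}

noncomputable def altB (f : (Fin n → Bool) → Bool) (x : Fin n → Bool) : ℕ := sSup (SB f x)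

lemma SB_zero (f : (Fin n → Bool) → Bool) (x : Fin n → Bool) : 0 ∈ SB f x :=
  ⟨fun _ => x, fun a b hab => absurd hab (by omega), fun _ => le_refl x, fun i => i.elim0⟩

lemma SB_bdd (f : (Fin n → Bool) → Bool) (x : Fin n → Bool) : BddAbove (SB f x) :=
  ⟨n, fun _ ⟨c, hc, _, _⟩ => chain_le c hc⟩

lemma altB_mem (f : (Fin n → Bool) → Bool) (x : Fin n → Bool) : altB f x ∈ SB f x :=
  Nat.sSup_mem ⟨0, SB_zero f x⟩ (SB_bdd f x)

lemma altB_mono (f : (Fin n → Bool) → Bool) : Monotone (altB f) := by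
  intro x y hxy
  exact csSup_le_csSup (SB_bdd f y) ⟨0, SB_zero f x⟩
    (fun k ⟨c, hc, hle, halt⟩ => ⟨c, hc, fun i => le_trans (hle i) hxy, halt⟩)

lemma altGe_bdd (f : (Fin n → Bool) → Bool) : BddAbove {k | altGe f k} :=
  ⟨n, fun _ ⟨c, hc, _⟩ => chain_le c hc⟩

lemma altB_le_alt (f : (Fin n → Bool) → Bool) (x : Fin n → Bool) : altB f x ≤ alt f :=
  csSup_le_csSup (altGe_bdd f) ⟨0, SB_zero f x⟩
    (fun _ ⟨c, hc, _, halt⟩ => ⟨c, hc, halt⟩)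

section adj

variable {α : Type*} {k : ℕ} (P : α → α → Prop)

lemma adj_snoc (c : Fin (k + 1) → α) (y : α)
    (h1 : ∀ i : Fin k, P (c i.castSucc) (c i.succ)) (h2 : P (c (Fin.last k)) y) :
    ∀ i : Fin (k + 1), P ((Fin.snoc c y : Fin (k + 1 + 1) → α) i.castSucc)
      ((Fin.snoc c y : Fin (k + 1 + 1) → α) i.succ) := by
  intro i
  induction i using Fin.lastCases with
  | last =>
    rw [Fin.succ_last, Fin.snoc_castSucc, Fin.snoc_last]
    exact h2
  | cast j =>
    rw [Fin.succ_castSucc, Fin.snoc_castSucc, Fin.snoc_castSucc]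
    exact h1 j

lemma adj_cons (c : Fin (k + 1) → α) (y : α)
    (h1 : ∀ i : Fin k, P (c i.castSucc) (c i.succ)) (h2 : P y (c 0)) :
    ∀ i : Fin (k + 1), P ((Fin.cons y c : Fin (k + 1 + 1) → α) i.castSucc)
      ((Fin.cons y c : Fin (k + 1 + 1) → α) i.succ) := by
  intro i
  induction i using Fin.cases with
  | zero =>
    rw [show ((0 : Fin (k+1)).castSucc) = 0 from rfl, Fin.cons_zero,
      show ((0 : Fin (k+1)).succ) = Fin.succ 0 from rfl, Fin.cons_succ]
    exact h2
  | succ j =>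
    rw [← Fin.succ_castSucc, Fin.cons_succ, Fin.cons_succ]
    exact h1 j

end adj

lemma parity {k : ℕ} {c : Fin (k + 1) → (Fin n → Bool)} {f : (Fin n → Bool) → Bool}
    (h : ∀ i : Fin k, f (c i.castSucc) ≠ f (c i.succ)) :
    ∀ j : Fin (k + 1), f (c j) = xor (decide (Odd (j : ℕ))) (f (c 0)) := by
  intro j
  induction j using Fin.induction with
  | zero => simp
  | succ i ih =>
    have hne := h i
    have hflip : f (c i.succ) = ! f (c i.castSucc) := by
      cases h1 : f (c i.castSucc) <;> cases h2 : f (c i.succ) <;> simp_all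
    rw [hflip, ih, Fin.coe_castSucc, Fin.val_succ]
    have hodd : decide (Odd ((i : ℕ) + 1)) = ! decide (Odd (i : ℕ)) := by
      by_cases ho : Odd (i : ℕ) <;> simp [ho, Nat.odd_add_one]
    rw [hodd]
    cases hd : decide (Odd (i : ℕ)) <;> cases f (c 0) <;> rfl

lemma key (f : (Fin n → Bool) → Bool) (x : Fin n → Bool) :
    f x = xor (decide (Odd (altB f x))) (f ⊥) := by
  obtain ⟨c, hc, hle, halt⟩ := altB_mem f x
  have h0 : f (c 0) = f ⊥ := by
    by_contra hne
    have hlt : (⊥ : Fin n → Bool) < c 0 := by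
      refine lt_of_le_of_ne bot_le ?_
      intro heq
      exact hne (by rw [← heq])
    have hmem : altB f x + 1 ∈ SB f x := by
      refine ⟨Fin.cons ⊥ c, ?_, ?_, ?_⟩
      · rw [Fin.strictMono_iff_lt_succ]
        exact adj_cons (· < ·) c ⊥ (fun i => hc (Fin.castSucc_lt_succ (i := i))) hlt
      · intro i
        induction i using Fin.cases with
        | zero => exact bot_le
        | succ j => rw [Fin.cons_succ]; exact hle j
      · exact adj_cons (fun a b => f a ≠ f b) c ⊥ halt (Ne.symm hne)
    have h2 := le_csSup (SB_bdd f x) hmem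
    rw [show sSup (SB f x) = altB f x from rfl] at h2
    omega
  -- f x = f (c (Fin.last k))
  have hlast : f (c (Fin.last (altB f x))) = f x := by
    by_contra hne
    have hlt : c (Fin.last (altB f x)) < x := by
      refine lt_of_le_of_ne (hle _) ?_
      intro heq
      exact hne (by rw [heq])
    have hmem : altB f x + 1 ∈ SB f x := by
      refine ⟨Fin.snoc c x, ?_, ?_, ?_⟩
      · rw [Fin.strictMono_iff_lt_succ]
        exact adj_snoc (· < ·) c x (fun i => hc (Fin.castSucc_lt_succ (i := i))) hlt
      · intro i
        induction i using Fin.lastCases with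
        | last => rw [Fin.snoc_last]
        | cast j => rw [Fin.snoc_castSucc]; exact hle j
      · exact adj_snoc (fun a b => f a ≠ f b) c x halt hne
    have h2 := le_csSup (SB_bdd f x) hmem
    rw [show sSup (SB f x) = altB f x from rfl] at h2
    omega
  have hpar := parity halt (Fin.last (altB f x))
  rw [← hlast, hpar, Fin.val_last, h0]

lemma card_filter_lt (K m : ℕ) (h : m ≤ K) :
    (Finset.univ.filter fun i : Fin K => (i : ℕ) < m).card = m := by
  have heq : (Finset.univ.filter fun i : Fin K => (i : ℕ) < m) =
      Finset.attachFin (Finset.range m)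
        (fun a ha => lt_of_lt_of_le (Finset.mem_range.mp ha) h) := by
    ext i
    simp [Finset.mem_attachFin]
  rw [heq, Finset.card_attachFin]
  simp

end DTAlt

open DTAlt

/-- The minimum non-adaptive monotone decision tree height of f equals alt(f). -/
theorem dtmna_eq_alt (n : ℕ) (f : (Fin n → Bool) → Bool) :
    DTmna f = alt f := by
  have h0 : 0 ∈ {k | altGe f k} :=
    ⟨fun _ => ⊥, fun a b hab => absurd hab (by omega), fun i => i.elim0⟩
  -- alt f is in the DT set
  have hmem : alt f ∈ {k | ∃ (fs : Fin k → (Fin n → Bool) → Bool)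
      (g : (Fin k → Bool) → Bool),
      (∀ i, Monotone (fs i)) ∧ ∀ x, f x = g (fun i => fs i x)} := by
    refine ⟨fun i x => decide ((i : ℕ) < altB f x),
      fun b => xor (decide (Odd ((Finset.univ.filter fun i => b i = true).card))) (f ⊥),
      ?_, ?_⟩
    · intro i x y hxy
      show decide ((i : ℕ) < altB f x) ≤ decide ((i : ℕ) < altB f y)
      cases h1 : decide ((i : ℕ) < altB f x) with
      | false => exact Bool.false_le _
      | true =>
        have h2 : (i : ℕ) < altB f y :=
          lt_of_lt_of_le (of_decide_eq_true h1) (altB_mono f hxy)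
        simp [h2]
    · intro x
      have hcount : (Finset.univ.filter fun i : Fin (alt f) =>
          (decide ((i : ℕ) < altB f x)) = true).card = altB f x := by
        have : (Finset.univ.filter fun i : Fin (alt f) =>
            (decide ((i : ℕ) < altB f x)) = true) =
            (Finset.univ.filter fun i : Fin (alt f) => (i : ℕ) < altB f x) := by
          ext i; simp
        rw [this, card_filter_lt _ _ (altB_le_alt f x)]
      simp only [hcount]
      exact key f x
  -- lower bound : every k in the DT set is ≥ alt f
  have hlb : ∀ k ∈ {k | ∃ (fs : Fin k → (Fin n → Bool) → Bool)
      (g : (Fin k → Bool) → Bool),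
      (∀ i, Monotone (fs i)) ∧ ∀ x, f x = g (fun i => fs i x)}, alt f ≤ k := by
    rintro k ⟨fs, g, hmono, heq⟩
    refine csSup_le ⟨0, h0⟩ ?_
    rintro m ⟨x, hx, halt⟩
    have hex : ∀ i : Fin m, ∃ j : Fin k,
        fs j (x i.castSucc) = false ∧ fs j (x i.succ) = true := by
      intro i
      have hne := halt i
      rw [heq, heq] at hne
      have : (fun j => fs j (x i.castSucc)) ≠ (fun j => fs j (x i.succ)) := by
        intro hcontra; exact hne (by rw [hcontra])
      obtain ⟨j, hj⟩ := Function.ne_iff.mp this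
      refine ⟨j, ?_⟩
      have hlej : fs j (x i.castSucc) ≤ fs j (x i.succ) :=
        hmono j (hx (Fin.castSucc_lt_succ (i := i))).le
      cases h1 : fs j (x i.castSucc) <;> cases h2 : fs j (x i.succ) <;>
        simp_all
      exact absurd hlej (by decide)
    choose F hF using hex
    have key2 : ∀ a b : Fin m, a < b → F a = F b → False := by
      intro a b hlt hab
      have hle2 : x a.succ ≤ x b.castSucc := by
        apply hx.monotone
        rw [Fin.le_def]
        simp only [Fin.val_succ, Fin.coe_castSucc]
        omega
      have hmono2 := hmono (F a) hle2
      rw [(hF a).2, hab, (hF b).1] at hmono2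
      exact absurd hmono2 (by decide)
    have hinj : Function.Injective F := by
      intro a b hab
      rcases lt_trichotomy a b with h | h | h
      · exact (key2 a b h hab).elim
      · exact h
      · exact (key2 b a h hab.symm).elim
    have := Fintype.card_le_of_injective F hinj
    simpa using this
  exact le_antisymm (Nat.sInf_le hmem) (le_csInf ⟨alt f, hmem⟩ hlb)
end

section
/- If f : {0,1}^n → {0,1} satisfies f(x) = g(f_1(x), ..., f_k(x)) for all x, where each f_i is monotone and g : {0,1}^k → {0,1} is arbitrary, then alt(f) ≤ k. -/
/-- If f factors through k monotone functions then alt(f) ≤ k. -/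
theorem alt_le_of_monotone_factorization (n k : ℕ) (f : (Fin n → Bool) → Bool)
    (fs : Fin k → (Fin n → Bool) → Bool) (g : (Fin k → Bool) → Bool)
    (hmono : ∀ i, Monotone (fs i))
    (hfac : ∀ x, f x = g (fun i => fs i x)) :
    alt f ≤ k := by
  apply csSup_le'
  rintro m ⟨x, hx, halt⟩
  -- F j : the tuple of values of the monotone functions at x j
  set F : Fin (m + 1) → (Fin k → Bool) := fun j i => fs i (x j) with hF
  have hFmono : Monotone F := fun j j' hjj' i => (hmono i) (hx.monotone hjj')
  -- count of true coordinates
  set N : Fin (m + 1) → ℕ :=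
    fun j => (Finset.univ.filter (fun i => F j i = true)).card with hN
  have hNle : ∀ j, N j ≤ k := by
    intro j
    simpa using (Finset.card_filter_le Finset.univ (fun i => F j i = true))
  have hstep : ∀ i : Fin m, N i.castSucc < N i.succ := by
    intro i
    have hne : F i.castSucc ≠ F i.succ := by
      intro h
      apply halt i
      rw [hfac, hfac]
      exact congrArg g h
    have hle : F i.castSucc ≤ F i.succ :=
      hFmono (le_of_lt (Fin.castSucc_lt_succ (i := i)))
    apply Finset.card_lt_card
    constructor
    · intro a ha
      simp only [Finset.mem_filter, Finset.mem_univ, true_and] at ha ⊢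
      exact le_antisymm (Bool.le_true _) (ha ▸ hle a)
    · intro hsub
      apply hne
      funext a
      have h1 : F i.castSucc a = true → F i.succ a = true := by
        intro h
        exact le_antisymm (Bool.le_true _) (h ▸ hle a)
      have h2 : F i.succ a = true → F i.castSucc a = true := by
        intro h
        have := hsub (Finset.mem_filter.mpr ⟨Finset.mem_univ a, h⟩)
        exact (Finset.mem_filter.mp this).2
      cases hb : F i.castSucc a <;> cases hb' : F i.succ a <;> simp_all
  have key : ∀ j : Fin (m + 1), (j : ℕ) + N 0 ≤ N j := by
    intro j
    induction j using Fin.induction with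
    | zero => simp
    | succ i ih =>
      have := hstep i
      have h1 : (i.castSucc : ℕ) + N 0 ≤ N i.castSucc := ih
      have : (i.castSucc : ℕ) + N 0 + 1 ≤ N i.succ := by omega
      simpa [Fin.val_succ, Nat.add_right_comm] using this
  have := key (Fin.last m)
  have := hNle (Fin.last m)
  simp only [Fin.val_last] at *
  omega
end

section
/- If f : {0,1}^n → {0,1} is computed by a Boolean circuit (over ∧, ∨, ¬ with fan-in 2 ∧/∨ gates and access to inputs) using at most k negation gates, then f is computed by a monotone decision tree of height k + 1. -/
inductive Circuit (n : ℕ) : Type where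
  | var : Fin n → Circuit n
  | const : Bool → Circuit n
  | and : Circuit n → Circuit n → Circuit n
  | or : Circuit n → Circuit n → Circuit n
  | not : Circuit n → Circuit n

def Circuit.eval {n : ℕ} : Circuit n → (Fin n → Bool) → Bool
  | .var i, x => x i
  | .const b, _ => b
  | .and c1 c2, x => c1.eval x && c2.eval x
  | .or c1 c2, x => c1.eval x || c2.eval x
  | .not c, x => !(c.eval x)

def Circuit.negCount {n : ℕ} : Circuit n → ℕ
  | .var _ => 0
  | .const _ => 0
  | .and c1 c2 => c1.negCount + c2.negCount
  | .or c1 c2 => c1.negCount + c2.negCount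
  | .not c => c.negCount + 1

/-!
Take a negation gate `¬D` whose input `D` is negation-free. Then `D` is monotone, so it is a legal
query, and once its value `b` is known, `¬D` can be replaced by the constant `!b`, leaving a circuit
with one negation fewer. Recursing on both answers, after `k` queries we reach a negation-free,
hence monotone, circuit, which one final query evaluates.
-/

namespace Circuit

variable {n : ℕ}

theorem monotone_eval_of_negCount_eq_zero (C : Circuit n) (h : C.negCount = 0) :
    Monotone C.eval := by
  induction C with
  | var i => exact fun x y hxy => hxy i
  | const b => exact monotone_const
  | and c1 c2 ih1 ih2 =>
    rw [negCount, Nat.add_eq_zero_iff] at h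
    exact (ih1 h.1).inf (ih2 h.2)
  | or c1 c2 ih1 ih2 =>
    rw [negCount, Nat.add_eq_zero_iff] at h
    exact (ih1 h.1).sup (ih2 h.2)
  | not c ih => simp [negCount] at h

/-- The input of the first negation gate, in left-to-right order, whose input is negation-free;
junk when `C` has no negation. -/
def bottomNegInput : Circuit n → Circuit n
  | var i => var i
  | const b => const b
  | and c1 c2 | or c1 c2 => if c1.negCount = 0 then c2.bottomNegInput else c1.bottomNegInput
  | not c => if c.negCount = 0 then c else c.bottomNegInput

def replaceBottomNeg (b : Bool) : Circuit n → Circuit n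
  | var i => var i
  | const c => const c
  | and c1 c2 => if c1.negCount = 0 then and c1 (c2.replaceBottomNeg b) else and (c1.replaceBottomNeg b) c2
  | or c1 c2 => if c1.negCount = 0 then or c1 (c2.replaceBottomNeg b) else or (c1.replaceBottomNeg b) c2
  | not c => if c.negCount = 0 then const b else not (c.replaceBottomNeg b)

theorem negCount_bottomNegInput (C : Circuit n) (h : C.negCount ≠ 0) :
    C.bottomNegInput.negCount = 0 := by
  induction C with
  | var i | const b => simp [negCount] at h
  | and c1 c2 ih1 ih2 | or c1 c2 ih1 ih2 =>
    rw [bottomNegInput]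
    split_ifs with h1
    · exact ih2 (by simpa [negCount, h1] using h)
    · exact ih1 h1
  | not c ih =>
    rw [bottomNegInput]
    split_ifs with h1
    exacts [h1, ih h1]

theorem negCount_replaceBottomNeg (C : Circuit n) (b : Bool) (h : C.negCount ≠ 0) :
    (C.replaceBottomNeg b).negCount + 1 = C.negCount := by
  induction C with
  | var i | const c => simp [negCount] at h
  | and c1 c2 ih1 ih2 | or c1 c2 ih1 ih2 =>
    rw [replaceBottomNeg]
    split_ifs with h1
    · have := ih2 (by simpa [negCount, h1] using h)
      simp only [negCount]
      omega
    · have := ih1 h1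
      simp only [negCount]
      omega
  | not c ih =>
    rw [replaceBottomNeg]
    split_ifs with h1
    · simp [negCount, h1]
    · simp only [negCount, ih h1]

theorem eval_replaceBottomNeg (C : Circuit n) (h : C.negCount ≠ 0) (x : Fin n → Bool) :
    (C.replaceBottomNeg (!C.bottomNegInput.eval x)).eval x = C.eval x := by
  induction C with
  | var i | const c => simp [negCount] at h
  | and c1 c2 ih1 ih2 | or c1 c2 ih1 ih2 =>
    by_cases h1 : c1.negCount = 0
    · have h2 : c2.negCount ≠ 0 := by simpa [negCount, h1] using h
      simp only [replaceBottomNeg, bottomNegInput, h1, if_true, eval, ih2 h2]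
    · simp only [replaceBottomNeg, bottomNegInput, h1, if_false, eval, ih1 h1]
  | not c ih =>
    by_cases h1 : c.negCount = 0
    · simp [replaceBottomNeg, bottomNegInput, h1, eval]
    · simp only [replaceBottomNeg, bottomNegInput, h1, if_false, eval, ih h1]

end Circuit

namespace MDT

variable {n : ℕ}

def query (q : (Fin n → Bool) → Bool) : MDT n :=
  node q (leaf false) (leaf true)

@[simp]
theorem eval_query (q : (Fin n → Bool) → Bool) (x : Fin n → Bool) : (query q).eval x = q x := by
  cases h : q x <;> simp [query, eval, h]

@[simp]
theorem height_query (q : (Fin n → Bool) → Bool) : (query q).height = 1 := rfl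

theorem monoQueries_query {q : (Fin n → Bool) → Bool} (hq : Monotone q) : (query q).MonoQueries :=
  ⟨hq, trivial, trivial⟩

end MDT

namespace Circuit

variable {n : ℕ}

def toMDT (C : Circuit n) : MDT n :=
  if _ : C.negCount = 0 then .query C.eval
  else .node C.bottomNegInput.eval (C.replaceBottomNeg true).toMDT (C.replaceBottomNeg false).toMDT
termination_by C.negCount
decreasing_by all_goals exact Nat.lt_of_succ_le (C.negCount_replaceBottomNeg _ ‹_›).le

theorem monoQueries_toMDT (C : Circuit n) : C.toMDT.MonoQueries := by
  fun_induction toMDT C with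
  | case1 C h => exact MDT.monoQueries_query (C.monotone_eval_of_negCount_eq_zero h)
  | case2 C h ih1 ih2 =>
    exact ⟨C.bottomNegInput.monotone_eval_of_negCount_eq_zero (C.negCount_bottomNegInput h), ih1, ih2⟩

theorem eval_toMDT (C : Circuit n) (x : Fin n → Bool) : C.toMDT.eval x = C.eval x := by
  fun_induction toMDT C with
  | case1 C h => exact MDT.eval_query _ x
  | case2 C h ih1 ih2 =>
    rw [MDT.eval, ← C.eval_replaceBottomNeg h x]
    cases C.bottomNegInput.eval x
    exacts [ih1, ih2]

theorem height_toMDT_le (C : Circuit n) : C.toMDT.height ≤ C.negCount + 1 := by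
  fun_induction toMDT C with
  | case1 C h => simp [h]
  | case2 C h ih1 ih2 =>
    have h1 := C.negCount_replaceBottomNeg true h
    have h2 := C.negCount_replaceBottomNeg false h
    rw [MDT.height]
    omega

end Circuit

/-- A function computed by a circuit with at most k negation gates is computed by
a monotone decision tree of height k + 1. -/
theorem circuit_to_mdt (n k : ℕ) (f : (Fin n → Bool) → Bool) (C : Circuit n)
    (hC : ∀ x, C.eval x = f x) (hneg : C.negCount ≤ k) :
    ∃ T : MDT n, T.MonoQueries ∧ (∀ x, T.eval x = f x) ∧ T.height ≤ k + 1 := by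
  exact ⟨C.toMDT, C.monoQueries_toMDT, fun x => (C.eval_toMDT x).trans (hC x),
    C.height_toMDT_le.trans (Nat.succ_le_succ hneg)⟩
end

section
/- Every Boolean function f : {0,1}^n → {0,1} can be computed by a non-deterministic monotone decision tree of height 2 and size ⌈alt(f)/2⌉: there exist monotone functions g_1, h_1, ..., g_s, h_s with s = ⌈(alt(f)+1)/2⌉ such that f(x) = 1 iff there exists i with g_i(x) = 0 and h_i(x) = 1. -/
section Aux

variable {n : ℕ} (f : (Fin n → Bool) → Bool)

/-- There is a strict chain of `j` points below `x` on which `f` alternates,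
starting with value `true`. -/
def Tc (j : ℕ) (x : Fin n → Bool) : Prop :=
  ∃ c : Fin j → (Fin n → Bool), StrictMono c ∧ (∀ i, c i ≤ x) ∧
    ∀ i : Fin j, f (c i) = decide (i.val % 2 = 0)

lemma Tc_mono {j : ℕ} {x y : Fin n → Bool} (hxy : x ≤ y) (h : Tc f j x) : Tc f j y := by
  obtain ⟨c, h1, h2, h3⟩ := h
  exact ⟨c, h1, fun i => le_trans (h2 i) hxy, h3⟩

lemma Tc_card_le {j : ℕ} {x : Fin n → Bool} (h : Tc f j x) : j ≤ 2 ^ n := by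
  obtain ⟨c, h1, -, -⟩ := h
  have := Fintype.card_le_of_injective c h1.injective
  simpa using this

lemma Tc_bddAbove (x : Fin n → Bool) : BddAbove {j | Tc f j x} :=
  ⟨2 ^ n, fun _ hj => Tc_card_le f hj⟩

lemma altGe_bddAbove : BddAbove {k | altGe f k} := by
  refine ⟨2 ^ n, fun k hk => ?_⟩
  obtain ⟨c, h1, -⟩ := hk
  have := Fintype.card_le_of_injective c h1.injective
  simp only [Fintype.card_fin, Fintype.card_fun, Fintype.card_bool] at this
  omega

lemma Tc_le_alt {j : ℕ} {x : Fin n → Bool} (h : Tc f j x) : j ≤ alt f + 1 := by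
  rcases j with _ | k
  · omega
  obtain ⟨c, h1, -, h3⟩ := h
  have hge : altGe f k := by
    refine ⟨c, h1, fun i => ?_⟩
    rw [h3, h3]
    have : i.val % 2 = 0 ∨ i.val % 2 = 1 := Nat.mod_two_eq_zero_or_one _
    rcases this with h | h <;>
      simp [Fin.val_succ, Nat.add_mod, h]
  have : k ≤ alt f := le_csSup (altGe_bddAbove f) hge
  omega

lemma Tc_extend {m : ℕ} {x : Fin n → Bool} (h : Tc f (m + 1) x)
    (hx : f x = decide ((m + 1) % 2 = 0)) : Tc f (m + 2) x := by
  obtain ⟨c, h1, h2, h3⟩ := h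
  have hlastval : f (c (Fin.last m)) = decide (m % 2 = 0) := by
    simpa using h3 (Fin.last m)
  have hne : c (Fin.last m) ≠ x := by
    intro he
    rw [he, hx] at hlastval
    have : m % 2 = 0 ∨ m % 2 = 1 := Nat.mod_two_eq_zero_or_one _
    rcases this with h | h <;> simp [Nat.add_mod, h] at hlastval
  have hlt : c (Fin.last m) < x := lt_of_le_of_ne (h2 _) hne
  refine ⟨Fin.snoc c x, ?_, ?_, ?_⟩
  · intro a b hab
    rcases Fin.eq_castSucc_or_eq_last b with ⟨b', rfl⟩ | rfl
    · have hab' : a < b'.castSucc := hab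
      rcases Fin.eq_castSucc_or_eq_last a with ⟨a', rfl⟩ | rfl
      · simp only [Fin.snoc_castSucc]
        exact h1 (by exact_mod_cast hab')
      · exact absurd hab' (by simp [Fin.lt_iff_val_lt_val])
    · rcases Fin.eq_castSucc_or_eq_last a with ⟨a', rfl⟩ | rfl
      · simp only [Fin.snoc_castSucc, Fin.snoc_last]
        exact lt_of_le_of_lt (h1.monotone (Fin.le_last a')) hlt
      · exact absurd hab (lt_irrefl _)
  · intro i
    rcases Fin.eq_castSucc_or_eq_last i with ⟨i', rfl⟩ | rfl
    · simpa using h2 i'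
    · simp
  · intro i
    rcases Fin.eq_castSucc_or_eq_last i with ⟨i', rfl⟩ | rfl
    · simpa using h3 i'
    · simpa using hx

end Aux

/-- Every Boolean function has a non-deterministic monotone decision tree of height 2
and size s = ⌈(alt(f)+1)/2⌉: f = ⋁_{i=1}^{s} (¬g_i ∧ h_i) with g_i, h_i monotone. -/
theorem nmdt_height_two (n : ℕ) (f : (Fin n → Bool) → Bool) :
    ∃ (g h : Fin ((alt f + 1 + 1) / 2) → (Fin n → Bool) → Bool),
      (∀ i, Monotone (g i)) ∧ (∀ i, Monotone (h i)) ∧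
      ∀ x, f x = true ↔ ∃ i, g i x = false ∧ h i x = true := by
  classical
  refine ⟨fun i x => decide (Tc f (2 * i.val + 2) x),
          fun i x => decide (Tc f (2 * i.val + 1) x), ?_, ?_, ?_⟩
  · intro i x y hxy
    by_cases hx : Tc f (2 * i.val + 2) x
    · simp [hx, Tc_mono f hxy hx]
    · simp [hx]
  · intro i x y hxy
    by_cases hx : Tc f (2 * i.val + 1) x
    · simp [hx, Tc_mono f hxy hx]
    · simp [hx]
  · intro x
    constructor
    · intro hfx
      have h1 : Tc f 1 x := by
        refine ⟨fun _ => x, fun a b hab => absurd (Subsingleton.elim a b) hab.ne, fun _ => le_rfl,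
          fun i => ?_⟩
        have : i.val = 0 := by omega
        simp [this, hfx]
      set S : Set ℕ := {j | Tc f j x} with hS
      have hne : S.Nonempty := ⟨1, h1⟩
      have hbdd := Tc_bddAbove f x
      set J := sSup S with hJ
      have hJS : J ∈ S := Nat.sSup_mem hne hbdd
      have hJ1 : 1 ≤ J := le_csSup hbdd h1
      have hodd : J % 2 = 1 := by
        by_contra hcon
        have hJ0 : J % 2 = 0 := by omega
        obtain ⟨m, hm⟩ : ∃ m, J = m + 1 := ⟨J - 1, by omega⟩
        have hext : Tc f (J + 1) x := by
          rw [hm]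
          exact Tc_extend f (hm ▸ hJS) (by rw [hfx]; simp; omega)
        have : J + 1 ≤ J := le_csSup hbdd hext
        omega
      set i := J / 2 with hi
      have hJeq : J = 2 * i + 1 := by omega
      have hle : J ≤ alt f + 1 := Tc_le_alt f hJS
      have hilt : i < (alt f + 1 + 1) / 2 := by omega
      refine ⟨⟨i, hilt⟩, ?_, ?_⟩
      · simp only [decide_eq_false_iff_not]
        intro hT
        have : 2 * i + 2 ≤ J := le_csSup hbdd hT
        omega
      · simp only [decide_eq_true_eq]
        rw [← hJeq]
        exact hJS
    · rintro ⟨i, hg, hh⟩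
      rw [decide_eq_false_iff_not] at hg
      rw [decide_eq_true_eq] at hh
      by_contra hcon
      have hfx : f x = false := by
        cases hfv : f x
        · rfl
        · exact absurd hfv hcon
      refine hg (Tc_extend f hh ?_)
      rw [hfx]
      simp
end

section
/- The function f(x) = (¬x_1 ∧ x_2) ∨ (¬x_3 ∧ x_4) ∨ ... ∨ (¬x_{n-1} ∧ x_n) on n = 2m variables has alternation alt(f) ≥ n/2, hence every monotone decision tree computing f has height at least ⌈log₂(n/2 + 1)⌉. -/
/-- Number of true coordinates. -/
def bweight {n : ℕ} (y : Fin n → Bool) : ℕ :=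
  (Finset.univ.filter (fun i => y i = true)).card

lemma bweight_le {n : ℕ} (y : Fin n → Bool) : bweight y ≤ n := by
  classical
  have := Finset.card_filter_le (Finset.univ : Finset (Fin n)) (fun i => y i = true)
  simpa [bweight] using this

lemma bweight_lt {n : ℕ} {y z : Fin n → Bool} (h : y < z) : bweight y < bweight z := by
  classical
  obtain ⟨hle, hne⟩ := lt_iff_le_and_ne.mp h
  have hsub : (Finset.univ.filter (fun i => y i = true)) ⊆
      (Finset.univ.filter (fun i => z i = true)) := by
    intro i hi
    simp only [Finset.mem_filter, Finset.mem_univ, true_and] at *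
    have h2 := hle i
    rw [hi] at h2
    cases hz2 : z i
    · rw [hz2] at h2; simp [Bool.le_iff_imp] at h2
    · rfl
  apply Finset.card_lt_card
  rw [Finset.ssubset_iff_of_subset hsub]
  have hex : ∃ i, y i ≠ z i := by
    by_contra hc; push_neg at hc; exact hne (funext hc)
  obtain ⟨i, hi⟩ := hex
  have h2 := hle i
  refine ⟨i, ?_, ?_⟩ <;> simp only [Finset.mem_filter, Finset.mem_univ, true_and]
  · cases hy : y i
    · cases hz2 : z i
      · rw [hy, hz2] at hi; exact absurd rfl hi
      · rfl
    · rw [hy] at h2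
      cases hz2 : z i
      · rw [hz2] at h2; simp [Bool.le_iff_imp] at h2
      · rfl
  · intro hy
    rw [hy] at h2 hi
    cases hz2 : z i
    · rw [hz2] at h2; simp [Bool.le_iff_imp] at h2
    · rw [hz2] at hi; exact hi rfl

lemma altGe_le {n : ℕ} {f : (Fin n → Bool) → Bool} {k : ℕ} (h : altGe f k) : k ≤ n := by
  obtain ⟨x, hx, -⟩ := h
  have hsm : StrictMono (fun i : Fin (k+1) => (⟨bweight (x i), by
      have := bweight_le (x i); omega⟩ : Fin (n+1))) := by
    intro i j hij
    simp only [Fin.mk_lt_mk]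
    exact bweight_lt (hx hij)
  have := Fintype.card_le_of_injective _ hsm.injective
  simpa using this

lemma eval_alt_bound {n : ℕ} (x : ℕ → Fin n → Bool) (hx : Monotone x) (T : MDT n) :
    T.MonoQueries → ∀ a b : ℕ, a ≤ b →
      (∀ i, a ≤ i → i < b → T.eval (x i) ≠ T.eval (x (i+1))) →
      b - a + 1 ≤ 2 ^ T.height := by
  induction T with
  | leaf v =>
    intro _ a b hab halt
    rcases Nat.lt_or_ge a b with h | h
    · exact absurd rfl (halt a le_rfl h)
    · simp [MDT.height]; omega
  | node q t0 t1 ih0 ih1 =>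
    intro hT a b hab halt
    obtain ⟨hq, h0, h1⟩ := hT
    have hmono : ∀ i j : ℕ, i ≤ j → q (x i) = true → q (x j) = true := by
      intro i j hij hi
      have hle := hq (hx hij)
      rw [hi] at hle
      cases hb : q (x j)
      · rw [hb] at hle; exact absurd hle (by decide)
      · rfl
    have hh0 : 2 ^ t0.height ≤ 2 ^ (MDT.node q t0 t1).height :=
      Nat.pow_le_pow_right (by norm_num) (by simp [MDT.height]; omega)
    have hh1 : 2 ^ t1.height ≤ 2 ^ (MDT.node q t0 t1).height :=
      Nat.pow_le_pow_right (by norm_num) (by simp [MDT.height]; omega)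
    by_cases hb : q (x b) = true
    · by_cases ha : q (x a) = true
      · -- query true on the whole interval
        have hall : ∀ i, a ≤ i → q (x i) = true := fun i hai => hmono a i hai ha
        have H := ih1 h1 a b hab ?_
        · omega
        · intro i hai hib
          have e1 : (MDT.node q t0 t1).eval (x i) = t1.eval (x i) := by
            simp [MDT.eval, hall i hai]
          have e2 : (MDT.node q t0 t1).eval (x (i+1)) = t1.eval (x (i+1)) := by
            simp [MDT.eval, hall (i+1) (by omega)]
          have := halt i hai hib
          rw [e1, e2] at this
          exact this
      · -- mixed: false at a, true at b
        obtain ⟨c, hc, hltc, hcb⟩ :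
            ∃ c, q (x c) = true ∧ (∀ i, i < c → q (x i) = false) ∧ c ≤ b := by
          have hexists : ∃ i, q (x i) = true := ⟨b, hb⟩
          refine ⟨Nat.find hexists, Nat.find_spec hexists, ?_, Nat.find_le hb⟩
          intro i hi
          have hmin := Nat.find_min hexists hi
          cases h' : q (x i)
          · rfl
          · exact absurd h' hmin
        have hac : a < c := by
          by_contra h
          push_neg at h
          exact ha (hmono c a h hc)
        have hsum : 2 ^ t0.height + 2 ^ t1.height ≤ 2 ^ (MDT.node q t0 t1).height := by
          have l0 : 2 ^ t0.height ≤ 2 ^ max t0.height t1.height :=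
            Nat.pow_le_pow_right (by norm_num) (le_max_left _ _)
          have l1 : 2 ^ t1.height ≤ 2 ^ max t0.height t1.height :=
            Nat.pow_le_pow_right (by norm_num) (le_max_right _ _)
          have hexp : (2:ℕ) ^ (MDT.node q t0 t1).height
              = 2 * 2 ^ max t0.height t1.height := by
            simp [MDT.height, pow_succ]; ring
          omega
        have H0 := ih0 h0 a (c-1) (by omega) ?_
        · have H1 := ih1 h1 c b hcb ?_
          · omega
          · intro i hci hib
            have e1 : (MDT.node q t0 t1).eval (x i) = t1.eval (x i) := by
              simp [MDT.eval, hmono c i hci hc]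
            have e2 : (MDT.node q t0 t1).eval (x (i+1)) = t1.eval (x (i+1)) := by
              simp [MDT.eval, hmono c (i+1) (by omega) hc]
            have := halt i (by omega) hib
            rw [e1, e2] at this
            exact this
        · intro i hai hic
          have e1 : (MDT.node q t0 t1).eval (x i) = t0.eval (x i) := by
            simp [MDT.eval, hltc i (by omega)]
          have e2 : (MDT.node q t0 t1).eval (x (i+1)) = t0.eval (x (i+1)) := by
            simp [MDT.eval, hltc (i+1) (by omega)]
          have := halt i hai (by omega)
          rw [e1, e2] at this
          exact this
    · -- query false on the whole interval
      have hall : ∀ i, i ≤ b → q (x i) = false := by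
        intro i hib
        cases hi : q (x i)
        · rfl
        · exact absurd (hmono i b hib hi) hb
      have H := ih0 h0 a b hab ?_
      · omega
      · intro i hai hib
        have e1 : (MDT.node q t0 t1).eval (x i) = t0.eval (x i) := by
          simp [MDT.eval, hall i (by omega)]
        have e2 : (MDT.node q t0 t1).eval (x (i+1)) = t0.eval (x (i+1)) := by
          simp [MDT.eval, hall (i+1) (by omega)]
        have := halt i hai hib
        rw [e1, e2] at this
        exact this

/-- The function f(x) = (¬x_1 ∧ x_2) ∨ ... ∨ (¬x_{n-1} ∧ x_n) on n = 2m variables has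
alternation at least n/2 = m, hence every monotone decision tree computing it has
height at least ⌈log₂(n/2 + 1)⌉. -/
theorem candidate_function_lower_bound (m : ℕ) (f : (Fin (2 * m) → Bool) → Bool)
    (hf : ∀ x, f x = true ↔ ∃ i : Fin m,
        x ⟨2 * (i : ℕ), by have := i.isLt; omega⟩ = false ∧
        x ⟨2 * (i : ℕ) + 1, by have := i.isLt; omega⟩ = true) :
    m ≤ alt f ∧
    ∀ T : MDT (2 * m), T.MonoQueries → (∀ x, T.eval x = f x) →
      Nat.clog 2 (m + 1) ≤ T.height := by
  classical
  -- the alternating chain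
  set z : ℕ → Fin (2 * m) → Bool :=
    fun j t => decide ((t : ℕ) < 2 * (j / 2) ∨ (j % 2 = 1 ∧ (t : ℕ) = j)) with hz
  have hzval : ∀ j, j ≤ m → (f (z j) = true ↔ j % 2 = 1) := by
    intro j hj
    rw [hf]
    constructor
    · rintro ⟨i, hi0, hi1⟩
      by_contra hodd
      have h2 : j % 2 = 0 := by omega
      simp only [hz, decide_eq_true_eq, decide_eq_false_iff_not] at hi0 hi1
      omega
    · intro hodd
      refine ⟨⟨j / 2, by omega⟩, ?_, ?_⟩ <;>
        simp only [hz, decide_eq_true_eq, decide_eq_false_iff_not] <;> omega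
  have hzmono : ∀ i j : ℕ, i ≤ j → z i ≤ z j := by
    intro i j hij t
    simp only [hz, Bool.le_iff_imp, decide_eq_true_eq]
    omega
  have hm : altGe f m := by
    refine ⟨fun j => z j, ?_, ?_⟩
    · rw [Fin.strictMono_iff_lt_succ]
      intro i
      have hi := i.isLt
      rw [Pi.lt_def]
      constructor
      · intro t
        simpa using hzmono (i : ℕ) ((i : ℕ) + 1) (by omega) t
      · rcases Nat.even_or_odd (i : ℕ) with he | ho
        · have h2 : (i : ℕ) % 2 = 0 := Nat.even_iff.mp he
          refine ⟨⟨(i : ℕ) + 1, by omega⟩, ?_⟩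
          simp only [hz, Fin.coe_castSucc, Fin.val_succ, Bool.lt_iff,
            decide_eq_true_eq, decide_eq_false_iff_not, and_true]
          omega
        · have h2 : (i : ℕ) % 2 = 1 := Nat.odd_iff.mp ho
          refine ⟨⟨(i : ℕ) - 1, by omega⟩, ?_⟩
          simp only [hz, Fin.coe_castSucc, Fin.val_succ, Bool.lt_iff,
            decide_eq_true_eq, decide_eq_false_iff_not, and_true]
          omega
    · intro i heq
      have hi := i.isLt
      have h1 := hzval (i : ℕ) (by omega)
      have h2 := hzval ((i : ℕ) + 1) (by omega)
      have : f (z (i : ℕ)) = f (z ((i : ℕ) + 1)) := by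
        simpa [Fin.coe_castSucc, Fin.val_succ] using heq
      rw [this] at h1
      have := h1.symm.trans h2
      omega
  constructor
  · exact le_csSup ⟨2 * m, fun k hk => altGe_le hk⟩ hm
  · intro T hT hcomp
    have hkey := eval_alt_bound z (fun i j hij => hzmono i j hij) T hT 0 m (Nat.zero_le m) ?_
    · have hle : m + 1 ≤ 2 ^ T.height := by omega
      exact (Nat.clog_le_iff_le_pow (by norm_num)).mpr hle
    · intro i hi0 him
      rw [hcomp, hcomp]
      intro heq
      have h1 := hzval i (by omega)
      have h2 := hzval (i + 1) (by omega)
      rw [heq] at h1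
      have := h1.symm.trans h2
      omega
end
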